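/- arXiv:1808.04023 — 9 statements merged into one kernel-verified Lean document; each statement's English description precedes it below -/
import Mathlib

section
/- Let k ≥ 3 be an integer and let c be a bad 2-coloring (with respect to k) of a graph G on n ≥ k + 2 vertices. If an edge uv ∈ E(G) belongs to at least 2k − 3 triangles of G (i.e., u and v have at least 2k − 3 common neighbors in G), then uv is a blue edge. -/
open SimpleGraph

/-- A bad 2-coloring (w.r.t. `k`) of a graph `G`, encoded by its red spanning subgraph `R`
(the blue graph is `G \ R`): the red edges form a subgraph of `G`, the red graph is
triangle-free, and every connected component of the blue graph has fewer than `k` vertices. -/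
def IsBadColoring (k : ℕ) {V : Type} (G R : SimpleGraph V) : Prop :=
  R ≤ G ∧ R.CliqueFree 3 ∧ ∀ v : V, {w : V | (G \ R).Reachable v w}.ncard < k

/-- `G` is `R_min(K_3, T_k)`-saturated: `G` admits a bad 2-coloring, but for every pair of
nonadjacent vertices `u ≠ v`, the graph `G + uv` admits no bad 2-coloring. -/
def IsRminSat (k : ℕ) {V : Type} (G : SimpleGraph V) : Prop :=
  (∃ R, IsBadColoring k G R) ∧
    ∀ u v : V, u ≠ v → ¬ G.Adj u v →
      ∀ R, ¬ IsBadColoring k (G ⊔ fromEdgeSet {s(u, v)}) R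

/-- If an edge `uv` of `G` belongs to at least `2k - 3` triangles, then in any bad
2-coloring of `G` (on at least `k + 2` vertices) the edge `uv` is blue. -/
theorem edge_in_many_triangles_is_blue {V : Type} [Fintype V] (k : ℕ) (hk : 3 ≤ k)
    (hV : k + 2 ≤ Fintype.card V) (G R : SimpleGraph V) (hbad : IsBadColoring k G R)
    (u v : V) (huv : G.Adj u v)
    (htri : 2 * k - 3 ≤ {w : V | G.Adj u w ∧ G.Adj v w}.ncard) :
    (G \ R).Adj u v := by
  classical
  rw [SimpleGraph.sdiff_adj]
  refine ⟨huv, fun hR => ?_⟩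
  obtain ⟨hle, hcf, hcomp⟩ := hbad
  have key : ∀ w, G.Adj u w → G.Adj v w → (G \ R).Adj u w ∨ (G \ R).Adj v w := by
    intro w hu hv
    by_cases h1 : R.Adj u w
    · by_cases h2 : R.Adj v w
      · exact absurd (SimpleGraph.is3Clique_iff.mpr ⟨u, v, w, hR, h1, h2, rfl⟩) (hcf _)
      · exact Or.inr ⟨hv, h2⟩
    · exact Or.inl ⟨hu, h1⟩
  set A := {w : V | (G \ R).Reachable u w} with hAdef
  set B := {w : V | (G \ R).Reachable v w} with hBdef
  have hsub : {w : V | G.Adj u w ∧ G.Adj v w} ⊆ (A \ {u}) ∪ (B \ {v}) := by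
    rintro w ⟨hu, hv⟩
    rcases key w hu hv with h | h
    · exact Or.inl ⟨h.reachable, fun e => hu.ne' (by simpa using e)⟩
    · exact Or.inr ⟨h.reachable, fun e => hv.ne' (by simpa using e)⟩
  have hA : A.ncard < k := hcomp u
  have hB : B.ncard < k := hcomp v
  have huA : u ∈ A := SimpleGraph.Reachable.refl u
  have hvB : v ∈ B := SimpleGraph.Reachable.refl v
  have h1 : (A \ {u}).ncard = A.ncard - 1 := Set.ncard_diff_singleton_of_mem huA
  have h2 : (B \ {v}).ncard = B.ncard - 1 := Set.ncard_diff_singleton_of_mem hvB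
  have hle2 : {w : V | G.Adj u w ∧ G.Adj v w}.ncard ≤ (A \ {u}).ncard + (B \ {v}).ncard :=
    le_trans (Set.ncard_le_ncard hsub (Set.toFinite _)) (Set.ncard_union_le _ _)
  omega
end

section
/- Let k ≥ 3 be an integer, let G be an R_min(K_3, T_k)-saturated graph on n ≥ k + 2 vertices, and let c be a bad 2-coloring of G (with respect to k). Then the number of connected components of G_b having fewer than k/2 vertices is at most 2. Moreover, if exactly two components D_1 and D_2 of G_b have fewer than k/2 vertices, then every vertex of D_1 is joined to every vertex of D_2 by a red edge of G. -/
open SimpleGraph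

lemma key_reach {V : Type} {B : SimpleGraph V} {u v a b : V}
    (h : (B ⊔ fromEdgeSet {s(u, v)}).Reachable a b) :
    B.Reachable a b ∨
      ((B.Reachable a u ∨ B.Reachable a v) ∧ (B.Reachable b u ∨ B.Reachable b v)) := by
  obtain ⟨p⟩ := h
  induction p with
  | nil => exact Or.inl (Reachable.refl _)
  | @cons a c b h p ih =>
    rw [sup_adj, fromEdgeSet_adj, Set.mem_singleton_iff, Sym2.eq_iff] at h
    rcases h with h | ⟨⟨rfl, rfl⟩ | ⟨rfl, rfl⟩, _⟩
    · rcases ih with hcb | ⟨hcu, hbu⟩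
      · exact Or.inl (h.reachable.trans hcb)
      · exact Or.inr ⟨hcu.imp (h.reachable.trans ·) (h.reachable.trans ·), hbu⟩
    · refine Or.inr ⟨Or.inl (Reachable.refl _), ?_⟩
      rcases ih with hcb | ⟨_, hbu⟩
      · exact Or.inr hcb.symm
      · exact hbu
    · refine Or.inr ⟨Or.inr (Reachable.refl _), ?_⟩
      rcases ih with hcb | ⟨_, hbu⟩
      · exact Or.inl hcb.symm
      · exact hbu

/-- In any bad 2-coloring of an `R_min(K_3, T_k)`-saturated graph on at least `k + 2`
vertices, at most two components of the blue graph have fewer than `k/2` vertices, and any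
two such distinct components are completely joined by red edges. -/
theorem small_blue_components {V : Type} [Fintype V] (k : ℕ) (hk : 3 ≤ k)
    (hV : k + 2 ≤ Fintype.card V) (G R : SimpleGraph V)
    (hsat : IsRminSat k G) (hbad : IsBadColoring k G R) :
    {C : (G \ R).ConnectedComponent | 2 * C.supp.ncard < k}.ncard ≤ 2 ∧
    ∀ C₁ C₂ : (G \ R).ConnectedComponent, C₁ ≠ C₂ →
      2 * C₁.supp.ncard < k → 2 * C₂.supp.ncard < k →
      ∀ u ∈ C₁.supp, ∀ v ∈ C₂.supp, R.Adj u v := by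
  classical
  set B := G \ R with hB
  have hsupp : ∀ x : V, ((G \ R).connectedComponentMk x).supp = {w | B.Reachable x w} := by
    intro x
    ext w
    simp only [ConnectedComponent.mem_supp_iff, ConnectedComponent.eq, Set.mem_setOf_eq]
    exact ⟨Reachable.symm, Reachable.symm⟩
  have hjoin : ∀ C₁ C₂ : (G \ R).ConnectedComponent, C₁ ≠ C₂ →
      2 * C₁.supp.ncard < k → 2 * C₂.supp.ncard < k →
      ∀ u ∈ C₁.supp, ∀ v ∈ C₂.supp, R.Adj u v := by
    intro C₁ C₂ hne h₁ h₂ u hu v hv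
    by_contra hnadj
    have hCu : (G \ R).connectedComponentMk u = C₁ := hu
    have hCv : (G \ R).connectedComponentMk v = C₂ := hv
    have huv : u ≠ v := by
      rintro rfl; exact hne (hCu.symm.trans hCv)
    have hnr : ¬ B.Reachable u v := fun h =>
      hne (hCu.symm.trans ((ConnectedComponent.eq.mpr h).trans hCv))
    have hnG : ¬ G.Adj u v := fun h =>
      hnr (((G.sdiff_adj R u v).mpr ⟨h, hnadj⟩).reachable)
    refine hsat.2 u v huv hnG R ⟨hbad.1.trans le_sup_left, hbad.2.1, ?_⟩
    intro x
    have hle : (G ⊔ fromEdgeSet {s(u, v)}) \ R ≤ B ⊔ fromEdgeSet {s(u, v)} := by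
      intro a b hab
      rw [sdiff_adj, sup_adj] at hab
      rw [sup_adj]
      obtain ⟨hab, hR⟩ := hab
      exact hab.imp (fun h => (G.sdiff_adj R a b).mpr ⟨h, hR⟩) id
    by_cases hx : B.Reachable x u ∨ B.Reachable x v
    · have hsub : {w | ((G ⊔ fromEdgeSet {s(u, v)}) \ R).Reachable x w} ⊆
          C₁.supp ∪ C₂.supp := by
        intro w hw
        have hw' : (B.Reachable w u ∨ B.Reachable w v) := by
          rcases key_reach (hw.mono hle) with hxw | ⟨_, hwuv⟩
          · exact hx.imp (hxw.symm.trans ·) (hxw.symm.trans ·)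
          · exact hwuv
        rcases hw' with h | h
        · exact Or.inl ((ConnectedComponent.mem_supp_iff _ _).mpr
            ((ConnectedComponent.eq.mpr h).trans hCu))
        · exact Or.inr ((ConnectedComponent.mem_supp_iff _ _).mpr
            ((ConnectedComponent.eq.mpr h).trans hCv))
      have h3 := Set.ncard_union_le C₁.supp C₂.supp
      have h4 := Set.ncard_le_ncard hsub (Set.toFinite _)
      omega
    · have hsub : {w | ((G ⊔ fromEdgeSet {s(u, v)}) \ R).Reachable x w} ⊆
          {w | B.Reachable x w} := by
        intro w hw
        rcases key_reach (hw.mono hle) with hxw | ⟨hxuv, _⟩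
        · exact hxw
        · exact absurd hxuv hx
      exact lt_of_le_of_lt (Set.ncard_le_ncard hsub (Set.toFinite _)) (hbad.2.2 x)
  refine ⟨?_, hjoin⟩
  by_contra hcard
  push_neg at hcard
  obtain ⟨C₁, hC₁, C₂, hC₂, C₃, hC₃, h12, h13, h23⟩ :=
    (Set.two_lt_ncard).mp hcard
  obtain ⟨u, rfl⟩ := C₁.exists_rep
  obtain ⟨v, rfl⟩ := C₂.exists_rep
  obtain ⟨w, rfl⟩ := C₃.exists_rep
  have hu : u ∈ ((G \ R).connectedComponentMk u).supp := rfl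
  have hv : v ∈ ((G \ R).connectedComponentMk v).supp := rfl
  have hw : w ∈ ((G \ R).connectedComponentMk w).supp := rfl
  have a12 := hjoin _ _ h12 hC₁ hC₂ u hu v hv
  have a13 := hjoin _ _ h13 hC₁ hC₃ u hu w hw
  have a23 := hjoin _ _ h23 hC₂ hC₃ v hv w hw
  exact hbad.2.1 {u, v, w} (is3Clique_triple_iff.mpr ⟨a12, a13, a23⟩)
end

section
/- If G is a K_3-saturated graph on n vertices with minimum degree δ(G) = 1, then G is isomorphic to the star K_{1, n−1}. -/
open SimpleGraph

/-- `G` is `K_3`-saturated: triangle-free, but adding any missing edge creates a triangle. -/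
def IsK3Saturated {V : Type} (G : SimpleGraph V) : Prop :=
  G.CliqueFree 3 ∧ ∀ u v : V, u ≠ v → ¬ G.Adj u v →
    ¬ (G ⊔ fromEdgeSet {s(u, v)}).CliqueFree 3

lemma exists_common {V : Type} [DecidableEq V] (G : SimpleGraph V) (hfree : G.CliqueFree 3) (u v : V)
    (hne : u ≠ v)
    (h : ¬ (G ⊔ fromEdgeSet {s(u, v)}).CliqueFree 3) :
    ∃ w, G.Adj w u ∧ G.Adj w v := by
  rw [CliqueFree] at h
  push_neg at h
  obtain ⟨t, ht⟩ := h
  rw [is3Clique_iff] at ht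
  obtain ⟨a, b, c, hab, hac, hbc, -⟩ := ht
  have key : ∀ x y : V, (G ⊔ fromEdgeSet {s(u, v)}).Adj x y →
      G.Adj x y ∨ (x = u ∧ y = v) ∨ (x = v ∧ y = u) := by
    intro x y hxy
    rcases hxy with h' | h'
    · exact Or.inl h'
    · rw [fromEdgeSet_adj, Set.mem_singleton_iff, Sym2.eq_iff] at h'
      tauto
  have h1 := key _ _ hab
  have h2 := key _ _ hac
  have h3 := key _ _ hbc
  rcases h1 with h1 | ⟨e1, e2⟩ | ⟨e1, e2⟩ <;>
    rcases h2 with h2 | ⟨e3, e4⟩ | ⟨e3, e4⟩ <;>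
      rcases h3 with h3 | ⟨e5, e6⟩ | ⟨e5, e6⟩ <;>
        subst_vars <;>
        first
          | exact absurd (is3Clique_triple_iff.mpr ⟨h1, h2, h3⟩) (hfree _)
          | exact ⟨_, h2.symm, h3.symm⟩
          | exact ⟨_, h3.symm, h2.symm⟩
          | exact ⟨_, h1.symm, h3⟩
          | exact ⟨_, h3, h1.symm⟩
          | exact ⟨_, h1, h2⟩
          | exact ⟨_, h2, h1⟩
          | exact ⟨_, h1.symm, h2.symm⟩
          | exact ⟨_, h2.symm, h1.symm⟩
          | exact ⟨_, h1, h3⟩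
          | exact ⟨_, h3, h1⟩
          | exact ⟨_, h1.symm, h2⟩
          | exact ⟨_, h2, h1.symm⟩
          | exact ⟨_, h1, h2.symm⟩
          | exact ⟨_, h2.symm, h1⟩
          | exact ⟨_, h1.symm, h3.symm⟩
          | exact ⟨_, h3.symm, h1.symm⟩
          | exact ⟨_, h1, h3.symm⟩
          | exact ⟨_, h3.symm, h1⟩
          | exact ⟨_, h1.symm, h3⟩
          | exact ⟨_, h2, h3⟩
          | exact ⟨_, h3, h2⟩
          | exact ⟨_, h2, h3.symm⟩
          | exact ⟨_, h3.symm, h2⟩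
          | exact ⟨_, h2.symm, h3⟩
          | exact ⟨_, h3, h2.symm⟩
          | simp_all

/-- A `K_3`-saturated graph with minimum degree `1` is a star `K_{1, n-1}`. -/
theorem k3_saturated_min_degree_one_is_star (n : ℕ) (G : SimpleGraph (Fin n))
    (hsat : IsK3Saturated G)
    (hmin : ∀ v, 1 ≤ (G.neighborSet v).ncard)
    (hex : ∃ v, (G.neighborSet v).ncard = 1) :
    Nonempty (G ≃g completeBipartiteGraph Unit (Fin (n - 1))) := by
  obtain ⟨hfree, hadd⟩ := hsat
  obtain ⟨v, hv⟩ := hex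
  obtain ⟨c, hc⟩ := Set.ncard_eq_one.mp hv
  have hvc : G.Adj v c := by
    have : c ∈ G.neighborSet v := by rw [hc]; rfl
    exact this
  have star : ∀ u : Fin n, u ≠ c → G.Adj c u := by
    intro u hu
    by_cases huv : u = v
    · exact huv ▸ hvc.symm
    · have hnadj : ¬ G.Adj u v := by
        intro h
        have : u ∈ G.neighborSet v := h.symm
        rw [hc] at this
        exact hu this
      obtain ⟨w, hwu, hwv⟩ :=
        exists_common G hfree u v huv (hadd u v huv hnadj)
      have : w ∈ G.neighborSet v := hwv.symm
      rw [hc] at this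
      exact this ▸ hwu
  have hadjc : ∀ a b : Fin n, G.Adj a b ↔ (a = c ∧ b ≠ c) ∨ (b = c ∧ a ≠ c) := by
    intro a b
    constructor
    · intro h
      by_cases ha : a = c
      · exact Or.inl ⟨ha, fun hb => G.irrefl (ha ▸ hb ▸ h)⟩
      · by_cases hb : b = c
        · exact Or.inr ⟨hb, ha⟩
        · exact absurd (is3Clique_triple_iff.mpr ⟨star a ha, star b hb, h⟩) (hfree _)
    · rintro (⟨rfl, hb⟩ | ⟨rfl, ha⟩)
      · exact star b hb
      · exact (star a ha).symm
  obtain ⟨m, rfl⟩ : ∃ m, n = m + 1 := ⟨n - 1, (Nat.succ_pred_eq_of_pos v.pos).symm⟩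
  let e : Fin (m + 1) ≃ Unit ⊕ Fin m :=
    (finSuccEquiv' c).trans ((Equiv.optionEquivSumPUnit (Fin m)).trans (Equiv.sumComm _ _))
  have hec : e c = Sum.inl () := by
    simp [e, finSuccEquiv'_at]
  have hL : ∀ a, (e a).isLeft ↔ a = c := by
    intro a
    constructor
    · intro h
      obtain ⟨u, hu⟩ := Sum.isLeft_iff.mp h
      exact e.injective (by rw [hu, hec])
    · rintro rfl; rw [hec]; rfl
  have hR : ∀ a, (e a).isRight ↔ a ≠ c := by
    intro a
    rw [← Sum.not_isLeft, not_iff_not, hL]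
  refine ⟨⟨e, ?_⟩⟩
  intro a b
  show ((e a).isLeft ∧ (e b).isRight ∨ (e a).isRight ∧ (e b).isLeft) ↔ G.Adj a b
  rw [hadjc]
  simp only [hL, hR]
  norm_num
  tauto
end

section
/- If G is a K_3-saturated graph with minimum degree δ(G) = 2, then there exist two nonadjacent vertices y and z of G and a partition of V(G) ∖ {y, z} into sets A, B, C such that: A is nonempty; either B and C are both empty or B and C are both nonempty; A, B, and C are independent sets in G; no vertex of A is adjacent to any vertex of B ∪ C; every vertex of B is adjacent to every vertex of C; the neighborhood of y is exactly A ∪ B; and the neighborhood of z is exactly A ∪ C. -/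
open SimpleGraph

lemma triFree {V : Type} {G : SimpleGraph V} (h : G.CliqueFree 3)
    {a b c : V} (hab : G.Adj a b) (hac : G.Adj a c) (hbc : G.Adj b c) : False := by
  classical
  exact h {a,b,c} (is3Clique_triple_iff.mpr ⟨hab, hac, hbc⟩)

lemma commonNbr {V : Type} [DecidableEq V] {G : SimpleGraph V} (hsat : IsK3Saturated G)
    {u v : V} (hne : u ≠ v) (hadj : ¬ G.Adj u v) : ∃ x, G.Adj u x ∧ G.Adj v x := by
  have h := hsat.2 u v hne hadj
  rw [CliqueFree] at h
  push_neg at h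
  obtain ⟨t, ht⟩ := h
  rw [is3Clique_iff] at ht
  obtain ⟨a, b, c, hab, hac, hbc, -⟩ := ht
  set G' := G ⊔ fromEdgeSet {s(u, v)} with hG'
  have edgecase : ∀ p q : V, G'.Adj p q → G.Adj p q ∨ s(p,q) = s(u,v) := by
    intro p q hpq
    rcases hpq with h | h
    · exact Or.inl h
    · exact Or.inr (by simpa using h.1)
  have hu : ∀ r : V, G'.Adj u r → r ≠ v → G.Adj u r := by
    intro r hr hrv
    rcases edgecase _ _ hr with h | h
    · exact h
    · rw [Sym2.eq_iff] at h
      rcases h with ⟨_, h⟩ | ⟨h, _⟩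
      · exact absurd h hrv
      · exact absurd h hne
  have hv : ∀ r : V, G'.Adj v r → r ≠ u → G.Adj v r := by
    intro r hr hru
    rcases edgecase _ _ hr with h | h
    · exact h
    · rw [Sym2.eq_iff] at h
      rcases h with ⟨h, _⟩ | ⟨_, h⟩
      · exact absurd h.symm hne
      · exact absurd h hru
  have key : ∀ p q r : V, s(p,q) = s(u,v) → G'.Adj p r → G'.Adj q r →
      ∃ x, G.Adj u x ∧ G.Adj v x := by
    intro p q r hpq hpr hqr
    rw [Sym2.eq_iff] at hpq
    rcases hpq with ⟨hp, hq⟩ | ⟨hp, hq⟩ <;> subst hp <;> subst hq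
    · exact ⟨r, hu r hpr hqr.ne', hv r hqr hpr.ne'⟩
    · exact ⟨r, hu r hqr hpr.ne', hv r hpr hqr.ne'⟩
  rcases edgecase _ _ hab with h1 | h1
  · rcases edgecase _ _ hac with h2 | h2
    · rcases edgecase _ _ hbc with h3 | h3
      · exact absurd h3 (fun h3 => triFree hsat.1 h1 h2 h3)
      · exact key b c a h3 (Or.inl h1.symm) (Or.inl h2.symm)
    · exact key a c b h2 (Or.inl h1) hbc.symm
  · exact key a b c h1 hac hbc

/-- Structure of a `K_3`-saturated graph with minimum degree `2`. -/
theorem k3_saturated_min_degree_two_structure {V : Type} [Fintype V] (G : SimpleGraph V)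
    (hsat : IsK3Saturated G)
    (hmin : ∀ v, 2 ≤ (G.neighborSet v).ncard)
    (hex : ∃ v, (G.neighborSet v).ncard = 2) :
    ∃ y z : V, y ≠ z ∧ ¬ G.Adj y z ∧ ∃ A B C : Set V,
      A ∪ B ∪ C = ({y, z} : Set V)ᶜ ∧
      Disjoint A B ∧ Disjoint A C ∧ Disjoint B C ∧
      A.Nonempty ∧ ((B = ∅ ∧ C = ∅) ∨ (B.Nonempty ∧ C.Nonempty)) ∧
      (∀ a ∈ A, ∀ a' ∈ A, ¬ G.Adj a a') ∧
      (∀ b ∈ B, ∀ b' ∈ B, ¬ G.Adj b b') ∧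
      (∀ c ∈ C, ∀ c' ∈ C, ¬ G.Adj c c') ∧
      (∀ a ∈ A, ∀ w ∈ B ∪ C, ¬ G.Adj a w) ∧
      (∀ b ∈ B, ∀ c ∈ C, G.Adj b c) ∧
      (∀ w : V, G.Adj y w ↔ w ∈ A ∪ B) ∧
      (∀ w : V, G.Adj z w ↔ w ∈ A ∪ C) := by
  classical
  obtain ⟨v, hv⟩ := hex
  rw [Set.ncard_eq_two] at hv
  obtain ⟨y, z, hyz, hN⟩ := hv
  have hady : G.Adj v y := by
    have : y ∈ G.neighborSet v := by rw [hN]; left; rfl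
    exact this
  have hadz : G.Adj v z := by
    have : z ∈ G.neighborSet v := by rw [hN]; right; rfl
    exact this
  have hnyz : ¬ G.Adj y z := fun h => triFree hsat.1 hady hadz h
  set Ny := G.neighborSet y with hNy
  set Nz := G.neighborSet z with hNz
  have hIndep : ∀ w : V, ∀ a ∈ G.neighborSet w, ∀ b ∈ G.neighborSet w, ¬ G.Adj a b :=
    fun w a ha b hb h => triFree hsat.1 ha hb h
  have hzNy : z ∉ Ny := fun h => hnyz h
  have hyNz : y ∉ Nz := fun h => hnyz h.symm
  have hyNy : y ∉ Ny := fun h => G.irrefl h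
  have hzNz : z ∉ Nz := fun h => G.irrefl h
  have hvNy : v ∈ Ny := hady.symm
  have hvNz : v ∈ Nz := hadz.symm
  have hcover : ∀ w : V, w ≠ y → w ≠ z → w ∈ Ny ∪ Nz := by
    intro w hwy hwz
    by_cases hwv : w = v
    · subst hwv; exact Or.inl hvNy
    · have hnadj : ¬ G.Adj v w := by
        intro h
        have : w ∈ G.neighborSet v := h
        rw [hN] at this
        rcases this with h | h
        · exact hwy h
        · exact hwz h
      obtain ⟨x, hvx, hwx⟩ := commonNbr hsat (fun h => hwv h.symm) hnadj
      have : x ∈ G.neighborSet v := hvx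
      rw [hN] at this
      rcases this with rfl | rfl
      · exact Or.inl hwx.symm
      · exact Or.inr hwx.symm
  refine ⟨y, z, hyz, hnyz, Ny ∩ Nz, Ny \ Nz, Nz \ Ny, ?_, ?_, ?_, ?_, ⟨v, hvNy, hvNz⟩,
    ?_, ?_, ?_, ?_, ?_, ?_, ?_, ?_⟩
  · ext w
    simp only [Set.mem_union, Set.mem_inter_iff, Set.mem_diff, Set.mem_compl_iff,
      Set.mem_insert_iff, Set.mem_singleton_iff]
    constructor
    · rintro ((⟨h, -⟩ | ⟨h, -⟩) | ⟨h, -⟩) <;> push_neg <;> constructor <;> rintro rfl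
      · exact hyNy h
      · exact hzNy h
      · exact hyNy h
      · exact hzNy h
      · exact hyNz h
      · exact hzNz h
    · intro h
      push_neg at h
      rcases hcover w h.1 h.2 with h1 | h1
      · by_cases h2 : w ∈ Nz
        · exact Or.inl (Or.inl ⟨h1, h2⟩)
        · exact Or.inl (Or.inr ⟨h1, h2⟩)
      · by_cases h2 : w ∈ Ny
        · exact Or.inl (Or.inl ⟨h2, h1⟩)
        · exact Or.inr ⟨h1, h2⟩
  · exact Set.disjoint_left.mpr (fun a ha hb => hb.2 ha.2)
  · exact Set.disjoint_left.mpr (fun a ha hb => hb.2 ha.1)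
  · exact Set.disjoint_left.mpr (fun a ha hb => hb.2 ha.1)
  · -- dichotomy
    have hBtoC : (Ny \ Nz).Nonempty → (Nz \ Ny).Nonempty := by
      rintro ⟨b, hbY, hbZ⟩
      have hzb : z ≠ b := fun h => hzNy (h ▸ hbY)
      obtain ⟨x, hzx, hbx⟩ := commonNbr hsat hzb (fun h => hbZ h)
      refine ⟨x, hzx, fun hxNy => ?_⟩
      exact triFree hsat.1 hxNy hbY hbx.symm
    have hCtoB : (Nz \ Ny).Nonempty → (Ny \ Nz).Nonempty := by
      rintro ⟨c, hcZ, hcY⟩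
      have hyc : y ≠ c := fun h => hyNz (h ▸ hcZ)
      obtain ⟨x, hyx, hcx⟩ := commonNbr hsat hyc (fun h => hcY h)
      refine ⟨x, hyx, fun hxNz => ?_⟩
      exact triFree hsat.1 hxNz hcZ hcx.symm
    rcases Set.eq_empty_or_nonempty (Ny \ Nz) with hB | hB
    · rcases Set.eq_empty_or_nonempty (Nz \ Ny) with hC | hC
      · exact Or.inl ⟨hB, hC⟩
      · exact absurd (hCtoB hC) (by rw [hB]; exact Set.not_nonempty_empty)
    · exact Or.inr ⟨hB, hBtoC hB⟩
  · exact fun a ha a' ha' => hIndep y a ha.1 a' ha'.1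
  · exact fun b hb b' hb' => hIndep y b hb.1 b' hb'.1
  · exact fun c hc c' hc' => hIndep z c hc.1 c' hc'.1
  · rintro a ha w (hw | hw)
    · exact hIndep y a ha.1 w hw.1
    · exact hIndep z a ha.2 w hw.1
  · rintro b ⟨hbY, hbZ⟩ c ⟨hcZ, hcY⟩
    by_contra hnadj
    have hbc : b ≠ c := fun h => hcY (h ▸ hbY)
    obtain ⟨x, hbx, hcx⟩ := commonNbr hsat hbc hnadj
    have hxNy : x ∉ Ny := fun h => triFree hsat.1 h hbY hbx.symm
    have hxNz : x ∉ Nz := fun h => triFree hsat.1 h hcZ hcx.symm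
    have hxy : x ≠ y := fun h => hcY (h ▸ hcx.symm : G.Adj y c)
    have hxz : x ≠ z := fun h => hbZ (h ▸ hbx.symm : G.Adj z b)
    rcases hcover x hxy hxz with h | h
    · exact hxNy h
    · exact hxNz h
  · intro w
    constructor
    · intro h
      by_cases h2 : w ∈ Nz
      · exact Or.inl ⟨h, h2⟩
      · exact Or.inr ⟨h, h2⟩
    · rintro (⟨h, -⟩ | ⟨h, -⟩) <;> exact h
  · intro w
    constructor
    · intro h
      by_cases h2 : w ∈ Ny
      · exact Or.inl ⟨h2, h⟩
      · exact Or.inr ⟨h, h2⟩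
    · rintro (⟨-, h⟩ | ⟨h, -⟩) <;> exact h
end

section
/- Let G be a K_3-saturated graph on n vertices with minimum degree δ = δ(G) ≥ 3, and let t = min{ d(v) : v is adjacent to a vertex of degree δ in G }. Then 2·e(G) ≥ (δ + 1)·n − δ² − 1 and 2·e(G) ≥ (δ + 2)·n − δ·(δ + t) − 2. -/
open SimpleGraph Finset

section Aux

variable {V : Type} [Fintype V] [DecidableEq V] {G : SimpleGraph V} [DecidableRel G.Adj]

omit [Fintype V] [DecidableRel G.Adj] in
lemma tri_free' (hfree : G.CliqueFree 3) {a b c : V} (h1 : G.Adj a b) (h2 : G.Adj a c)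
    (h3 : G.Adj b c) : False :=
  hfree {a, b, c} (is3Clique_triple_iff.mpr ⟨h1, h2, h3⟩)

lemma common_nbr (hfree : G.CliqueFree 3)
    (hsat : ∀ u v : V, u ≠ v → ¬ G.Adj u v → ¬ (G ⊔ fromEdgeSet {s(u, v)}).CliqueFree 3)
    {a b : V} (hab : a ≠ b) (hnadj : ¬ G.Adj a b) : ∃ z, G.Adj a z ∧ G.Adj b z := by
  have htri : ∀ p q r : V, G.Adj p q → G.Adj p r → G.Adj q r → False :=
    fun p q r h1 h2 h3 => tri_free' hfree h1 h2 h3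
  have h := hsat a b hab hnadj
  rw [CliqueFree] at h
  push_neg at h
  obtain ⟨s, hs⟩ := h
  rw [is3Clique_iff] at hs
  obtain ⟨x, y, z, hxy, hxz, hyz, _hseq⟩ := hs
  have conv : ∀ p q : V, (G ⊔ fromEdgeSet {s(a, b)}).Adj p q →
      G.Adj p q ∨ (p = a ∧ q = b) ∨ (p = b ∧ q = a) := by
    intro p q hpq
    rcases hpq with h | h
    · exact Or.inl h
    · rw [fromEdgeSet_adj, Set.mem_singleton_iff, Sym2.eq_iff] at h
      tauto
  have h1 := conv _ _ hxy
  have h2 := conv _ _ hxz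
  have h3 := conv _ _ hyz
  have hsymm : ∀ p q : V, G.Adj p q → G.Adj q p := fun p q h => h.symm
  rcases h1 with h1 | ⟨e1, e2⟩ | ⟨e1, e2⟩ <;>
    rcases h2 with h2 | ⟨e3, e4⟩ | ⟨e3, e4⟩ <;>
    rcases h3 with h3 | ⟨e5, e6⟩ | ⟨e5, e6⟩ <;>
    subst_vars <;>
    first
      | exact (htri _ _ _ h1 h2 h3).elim
      | exact ⟨_, h1, hsymm _ _ h3⟩
      | exact ⟨_, hsymm _ _ h1, hsymm _ _ h2⟩
      | exact ⟨_, h2, h3⟩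
      | exact ⟨_, hsymm _ _ h3, hsymm _ _ h1⟩
      | exact ⟨_, hsymm _ _ h2, h1⟩
      | exact ⟨_, h3, h2⟩
      | exact ⟨_, h3, hsymm _ _ h2⟩
      | exact ⟨_, hsymm _ _ h2, hsymm _ _ h3⟩
      | exact ⟨_, h2, hsymm _ _ h3⟩
      | exact ⟨_, h3, h1⟩
      | exact ⟨_, h1, h2⟩
      | exact ⟨_, h2, h1⟩
      | exact ⟨_, hsymm _ _ h2, hsymm _ _ h1⟩
      | exact ⟨_, hsymm _ _ h3, h1⟩
      | simp_all
      | tauto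

/-- The neighbors of a vertex `x ∈ N(c)` are exactly `c` plus its neighbors outside `{c} ∪ N(c)`. -/
lemma nbr_decomp (hfree : G.CliqueFree 3) (c : V) {x : V} (hx : x ∈ G.neighborFinset c) :
    G.neighborFinset x =
      insert c (G.neighborFinset x ∩ (univ \ insert c (G.neighborFinset c))) := by
  have hcx : G.Adj c x := by rwa [← mem_neighborFinset]
  ext y
  simp only [mem_insert, mem_inter, mem_sdiff, mem_univ, true_and, mem_neighborFinset]
  constructor
  · intro hxy
    by_cases hyc : y = c
    · exact Or.inl hyc
    · refine Or.inr ⟨hxy, ?_⟩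
      rintro (rfl | hyN)
      · exact hyc rfl
      · exact tri_free' hfree hcx hyN hxy
  · rintro (rfl | ⟨hxy, _⟩)
    · exact hcx.symm
    · exact hxy

/-- Main identity: `2e(G) = 2 deg(c) + ∑_{v ∈ A} (deg v + |N(v) ∩ N(c)|)`. -/
lemma edge_identity (hfree : G.CliqueFree 3) (c : V) :
    2 * G.edgeFinset.card = 2 * G.degree c +
      ∑ v ∈ univ \ insert c (G.neighborFinset c),
        (G.degree v + (G.neighborFinset v ∩ G.neighborFinset c).card) := by
  classical
  set N := G.neighborFinset c with hN
  set A : Finset V := univ \ insert c N with hA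
  have hcN : c ∉ N := by simp [hN]
  have hcA : c ∉ A := by simp [hA]
  -- degree of x ∈ N
  have hdegN : ∀ x ∈ N, G.degree x = 1 + (G.neighborFinset x ∩ A).card := by
    intro x hx
    have h := nbr_decomp hfree c hx
    rw [← hN, ← hA] at h
    have hcnot : c ∉ G.neighborFinset x ∩ A := fun hc => hcA (mem_inter.mp hc).2
    have h2 := congrArg Finset.card h
    rw [card_insert_of_notMem hcnot] at h2
    rw [SimpleGraph.degree, h2, add_comm]
  -- double counting
  have hswap : ∑ x ∈ N, (G.neighborFinset x ∩ A).card
      = ∑ v ∈ A, (G.neighborFinset v ∩ N).card := by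
    have h1 : ∀ (x : V) (s : Finset V), (G.neighborFinset x ∩ s).card
        = ∑ y ∈ s, (if G.Adj x y then 1 else 0) := by
      intro x s
      rw [← Finset.card_filter]
      congr 1
      ext y
      simp [mem_neighborFinset, and_comm]
    simp only [h1]
    rw [Finset.sum_comm]
    refine Finset.sum_congr rfl fun v _ => Finset.sum_congr rfl fun x _ => ?_
    by_cases h : G.Adj x v
    · simp [h, h.symm]
    · have h' : ¬ G.Adj v x := fun hh => h hh.symm
      simp [h, h']
  have hsplit : ∑ v ∈ univ, G.degree v
      = G.degree c + ∑ x ∈ N, G.degree x + ∑ v ∈ A, G.degree v := by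
    have h1 : A ⊆ univ := subset_univ _
    have h2 : ∑ v ∈ A, G.degree v + ∑ v ∈ insert c N, G.degree v = ∑ v ∈ univ, G.degree v := by
      rw [hA]
      exact Finset.sum_sdiff (subset_univ _)
    rw [← h2, Finset.sum_insert hcN]
    ring
  have hNcard : N.card = G.degree c := rfl
  have htwice := G.sum_degrees_eq_twice_card_edges
  have hNdeg : ∑ x ∈ N, G.degree x = N.card + ∑ v ∈ A, (G.neighborFinset v ∩ N).card := by
    rw [Finset.sum_congr rfl hdegN, Finset.sum_add_distrib, Finset.sum_const, smul_eq_mul,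
      mul_one, hswap]
  rw [← htwice, hsplit, hNdeg, hNcard, Finset.sum_add_distrib]
  ring

set_option maxHeartbeats 2000000 in
lemma core_bound (hfree : G.CliqueFree 3)
    (hcn : ∀ a b : V, a ≠ b → ¬ G.Adj a b → ∃ z, G.Adj a z ∧ G.Adj b z)
    {u w : V} (huw : G.Adj u w) (δ : ℕ) (hδ3 : 3 ≤ δ) (hdw : G.degree w = δ)
    (hmind : ∀ v, δ ≤ G.degree v) :
    ((δ : ℤ) + 2) * (univ \ insert u (G.neighborFinset u)).card ≤
      (∑ v ∈ univ \ insert u (G.neighborFinset u),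
        ((G.degree v : ℤ) + ((G.neighborFinset v ∩ G.neighborFinset u).card : ℤ)))
      + (δ : ℤ) * ((δ : ℤ) - 1) := by
  classical
  set N := G.neighborFinset u with hN
  set A : Finset V := univ \ insert u N with hA
  set a : V → ℕ := fun v => (G.neighborFinset v ∩ N).card with ha
  -- membership facts for A
  have hAmem : ∀ v ∈ A, v ≠ u ∧ ¬ G.Adj u v := by
    intro v hv
    rw [hA, mem_sdiff, mem_insert] at hv
    push_neg at hv
    exact ⟨hv.2.1, fun h => hv.2.2 (by rwa [hN, SimpleGraph.mem_neighborFinset])⟩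
  have huA : u ∉ A := by simp [hA]
  -- every vertex of A has a neighbor in N
  have ha1 : ∀ v ∈ A, 1 ≤ a v := by
    intro v hv
    obtain ⟨hvu, hvadj⟩ := hAmem v hv
    obtain ⟨z, hz1, hz2⟩ := hcn u v (Ne.symm hvu) hvadj
    have : z ∈ G.neighborFinset v ∩ N := by
      rw [mem_inter, SimpleGraph.mem_neighborFinset, SimpleGraph.mem_neighborFinset]
      exact ⟨hz2, hz1⟩
    have hne : (G.neighborFinset v ∩ N).Nonempty := ⟨z, this⟩
    exact card_pos.mpr hne
  set p : V → Prop := fun v => G.degree v + a v = δ + 1 with hp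
  set B : Finset V := A.filter p with hB
  set C : Finset V := A.filter (fun v => ¬ p v) with hC
  have hBA : B ⊆ A := filter_subset _ _
  have hCA : C ⊆ A := filter_subset _ _
  have hBd : ∀ v ∈ B, G.degree v = δ ∧ a v = 1 := by
    intro v hv
    rw [hB, mem_filter] at hv
    have h1 := hmind v
    have h2 := ha1 v hv.1
    have h3 := hv.2
    constructor <;> omega
  have hCd : ∀ v ∈ C, δ + 2 ≤ G.degree v + a v := by
    intro v hv
    rw [hC, mem_filter] at hv
    have h1 := hmind v
    have h2 := ha1 v hv.1
    have h3 := hv.2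
    omega
  set S : Finset V := G.neighborFinset w ∩ A with hS
  have hSA : S ⊆ A := inter_subset_right
  -- |S| ≤ δ - 1
  have hScard : S.card + 1 ≤ δ := by
    have h1 : insert u S ⊆ G.neighborFinset w := by
      intro x hx
      rcases mem_insert.mp hx with rfl | hx
      · rw [SimpleGraph.mem_neighborFinset]; exact huw.symm
      · exact (mem_inter.mp hx).1
    have h2 : u ∉ S := fun h => huA (hSA h)
    have h3 := card_le_card h1
    rw [card_insert_of_notMem h2] at h3
    have h4 : (G.neighborFinset w).card = δ := hdw
    omega
  -- cover of B
  have hcover : B ⊆ (B ∩ S) ∪ S.biUnion (fun z => B ∩ G.neighborFinset z) := by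
    intro v hv
    have hvA := hBA hv
    obtain ⟨hvu, hvadj⟩ := hAmem v hvA
    by_cases hwv : G.Adj w v
    · apply mem_union_left
      rw [mem_inter]
      exact ⟨hv, mem_inter.mpr ⟨(SimpleGraph.mem_neighborFinset _ _ _).mpr hwv, hvA⟩⟩
    · apply mem_union_right
      have hvw : v ≠ w := by
        rintro rfl
        have : v ∈ insert u N := mem_insert.mpr (Or.inr ((SimpleGraph.mem_neighborFinset _ _ _).mpr huw))
        rw [hA, mem_sdiff] at hvA
        exact hvA.2 this
      obtain ⟨z, hz1, hz2⟩ := hcn w v (Ne.symm hvw) hwv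
      have hzu : z ≠ u := by
        rintro rfl
        exact hvadj hz2.symm
      have hzN : z ∉ N := by
        intro hzN
        exact tri_free' hfree ((SimpleGraph.mem_neighborFinset _ _ _).mp hzN) huw hz1.symm
      have hzA : z ∈ A := by
        rw [hA, mem_sdiff, mem_insert]
        push_neg
        exact ⟨mem_univ _, hzu, hzN⟩
      rw [mem_biUnion]
      refine ⟨z, mem_inter.mpr ⟨(SimpleGraph.mem_neighborFinset _ _ _).mpr hz1, hzA⟩, mem_inter.mpr ⟨hv, ?_⟩⟩
      exact (SimpleGraph.mem_neighborFinset _ _ _).mpr hz2.symm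
  have hcard1 : B.card ≤ (B ∩ S).card + ∑ z ∈ S, (B ∩ G.neighborFinset z).card := by
    calc B.card ≤ ((B ∩ S) ∪ S.biUnion (fun z => B ∩ G.neighborFinset z)).card :=
          card_le_card hcover
      _ ≤ (B ∩ S).card + (S.biUnion (fun z => B ∩ G.neighborFinset z)).card := card_union_le _ _
      _ ≤ (B ∩ S).card + ∑ z ∈ S, (B ∩ G.neighborFinset z).card := by
          exact Nat.add_le_add_left (card_biUnion_le) _
  -- per-vertex bound
  have hkey : ∀ z : V, (B ∩ G.neighborFinset z).card + a z ≤ G.degree z := by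
    intro z
    have hsub : B ∩ G.neighborFinset z ⊆ G.neighborFinset z \ N := by
      intro v hv
      rw [mem_inter] at hv
      rw [mem_sdiff]
      refine ⟨hv.2, ?_⟩
      have hvA := hBA hv.1
      rw [hA, mem_sdiff, mem_insert] at hvA
      push_neg at hvA
      exact hvA.2.2
    have h1 := card_le_card hsub
    have h2 : (G.neighborFinset z \ N).card + (G.neighborFinset z ∩ N).card
        = (G.neighborFinset z).card := card_sdiff_add_card_inter _ _
    have h3 : G.degree z = (G.neighborFinset z).card := rfl
    have h4 : a z = (G.neighborFinset z ∩ N).card := rfl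
    omega
  -- split S
  have hSsplit : (S.filter p).card + (S.filter (fun v => ¬ p v)).card = S.card := by
    have := Finset.card_filter_add_card_filter_not (s := S) (p := p)
    convert this using 2
  have hBS : (B ∩ S).card ≤ (S.filter p).card := by
    apply card_le_card
    intro v hv
    rw [mem_inter, hB, mem_filter] at hv
    rw [mem_filter]
    exact ⟨hv.2, hv.1.2⟩
  set F : V → ℤ := fun v => (G.degree v : ℤ) + (a v : ℤ) with hF
  set g : V → ℤ := fun z => ((B ∩ G.neighborFinset z).card : ℤ) with hg
  -- sum over S.filter p
  have hsum_p : ∑ z ∈ S.filter p, g z ≤ ((δ : ℤ) - 1) * (S.filter p).card := by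
    have per : ∀ z ∈ S.filter p, g z ≤ (δ : ℤ) - 1 := by
      intro z hz
      rw [mem_filter] at hz
      have hzB : z ∈ B := by rw [hB, mem_filter]; exact ⟨hSA hz.1, hz.2⟩
      obtain ⟨hd, haz⟩ := hBd z hzB
      have hk := hkey z
      rw [hg]
      simp only []
      omega
    calc ∑ z ∈ S.filter p, g z ≤ ∑ _z ∈ S.filter p, ((δ : ℤ) - 1) :=
          Finset.sum_le_sum per
      _ = ((δ : ℤ) - 1) * (S.filter p).card := by
          rw [Finset.sum_const, nsmul_eq_mul, mul_comm]
  -- sum over S.filter ¬p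
  have hsum_np : ∑ z ∈ S.filter (fun v => ¬ p v), g z
      ≤ (∑ z ∈ S.filter (fun v => ¬ p v), (F z - ((δ : ℤ) + 2)))
        + (δ : ℤ) * (S.filter (fun v => ¬ p v)).card := by
    have per : ∀ z ∈ S.filter (fun v => ¬ p v), g z ≤ (F z - ((δ : ℤ) + 2)) + (δ : ℤ) := by
      intro z hz
      rw [mem_filter] at hz
      have hza := ha1 z (hSA hz.1)
      have hk := hkey z
      rw [hg, hF]
      simp only []
      omega
    calc ∑ z ∈ S.filter (fun v => ¬ p v), g z
        ≤ ∑ z ∈ S.filter (fun v => ¬ p v), ((F z - ((δ : ℤ) + 2)) + (δ : ℤ)) :=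
          Finset.sum_le_sum per
      _ = _ := by rw [Finset.sum_add_distrib, Finset.sum_const, nsmul_eq_mul, mul_comm]
  have hsubC : S.filter (fun v => ¬ p v) ⊆ C := by
    intro z hz
    rw [mem_filter] at hz
    rw [hC, mem_filter]
    exact ⟨hSA hz.1, hz.2⟩
  have hmono : ∑ z ∈ S.filter (fun v => ¬ p v), (F z - ((δ : ℤ) + 2))
      ≤ ∑ z ∈ C, (F z - ((δ : ℤ) + 2)) := by
    apply Finset.sum_le_sum_of_subset_of_nonneg hsubC
    intro v hv _
    have h1 := hCd v hv
    rw [hF]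
    simp only []
    omega
  have hgS : ∑ z ∈ S.filter p, g z + ∑ z ∈ S.filter (fun v => ¬ p v), g z
      = ∑ z ∈ S, g z := Finset.sum_filter_add_sum_filter_not S p g
  -- cast hcard1 to ℤ
  have hcard1' : (B.card : ℤ) ≤ ((B ∩ S).card : ℤ) + ∑ z ∈ S, g z := by
    have := hcard1
    have hcast : ((∑ z ∈ S, (B ∩ G.neighborFinset z).card : ℕ) : ℤ) = ∑ z ∈ S, g z := by
      rw [Nat.cast_sum]
    push_cast
    rw [← hcast]
    exact_mod_cast this
  -- core inequality
  have hcore : (B.card : ℤ) ≤ (δ : ℤ) * ((δ : ℤ) - 1) + ∑ z ∈ C, (F z - ((δ : ℤ) + 2)) := by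
    have h1 : ((B ∩ S).card : ℤ) ≤ ((S.filter p).card : ℤ) := by exact_mod_cast hBS
    have h2 : ((S.filter p).card : ℤ) + ((S.filter (fun v => ¬ p v)).card : ℤ)
        = (S.card : ℤ) := by exact_mod_cast hSsplit
    have h3 : (S.card : ℤ) + 1 ≤ (δ : ℤ) := by exact_mod_cast hScard
    have h4 : (0:ℤ) ≤ (S.filter p).card := Int.natCast_nonneg _
    have h5 : (0:ℤ) ≤ (S.filter (fun v => ¬ p v)).card := Int.natCast_nonneg _
    nlinarith [hcard1', hgS, hsum_p, hsum_np, hmono]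
  -- assemble
  have hAsplit : ∑ v ∈ B, F v + ∑ v ∈ C, F v = ∑ v ∈ A, F v :=
    Finset.sum_filter_add_sum_filter_not A p F
  have hBsum : ∑ v ∈ B, F v = ((δ : ℤ) + 1) * B.card := by
    have : ∀ v ∈ B, F v = (δ : ℤ) + 1 := by
      intro v hv
      obtain ⟨hd, haz⟩ := hBd v hv
      rw [hF]
      simp only []
      omega
    rw [Finset.sum_congr rfl this, Finset.sum_const, nsmul_eq_mul, mul_comm]
  have hCsum : ∑ v ∈ C, F v = ∑ z ∈ C, (F z - ((δ : ℤ) + 2)) + ((δ : ℤ) + 2) * C.card := by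
    rw [Finset.sum_sub_distrib, Finset.sum_const, nsmul_eq_mul]
    ring
  have hABC : (A.card : ℤ) = (B.card : ℤ) + (C.card : ℤ) := by
    have := Finset.card_filter_add_card_filter_not (s := A) (p := p)
    rw [← hB, ← hC] at this
    exact_mod_cast this.symm
  have hgoal : ∑ v ∈ A, F v = ∑ v ∈ A, ((G.degree v : ℤ) + ((G.neighborFinset v ∩ N).card : ℤ)) := rfl
  rw [← hgoal, ← hAsplit, hBsum, hCsum, hABC]
  linarith [hcore]

lemma a_pos (hcn : ∀ a b : V, a ≠ b → ¬ G.Adj a b → ∃ z, G.Adj a z ∧ G.Adj b z) (c : V) :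
    ∀ v ∈ univ \ insert c (G.neighborFinset c),
      1 ≤ (G.neighborFinset v ∩ G.neighborFinset c).card := by
  intro v hv
  rw [mem_sdiff, mem_insert] at hv
  push_neg at hv
  obtain ⟨-, hvc, hvN⟩ := hv
  have hnadj : ¬ G.Adj c v := fun h => hvN ((SimpleGraph.mem_neighborFinset _ _ _).mpr h)
  obtain ⟨z, hz1, hz2⟩ := hcn c v (Ne.symm hvc) hnadj
  have : z ∈ G.neighborFinset v ∩ G.neighborFinset c :=
    mem_inter.mpr ⟨(SimpleGraph.mem_neighborFinset _ _ _).mpr hz2,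
      (SimpleGraph.mem_neighborFinset _ _ _).mpr hz1⟩
  exact card_pos.mpr ⟨z, this⟩

lemma card_A (c : V) :
    (univ \ insert c (G.neighborFinset c)).card + (G.degree c + 1) = Fintype.card V := by
  have h1 : c ∉ G.neighborFinset c := by
    rw [SimpleGraph.mem_neighborFinset]
    exact G.loopless.irrefl c
  have h2 : insert c (G.neighborFinset c) ⊆ univ := subset_univ _
  have h3 := Finset.card_sdiff_add_card_eq_card h2
  rw [card_insert_of_notMem h1] at h3
  have h4 : G.degree c = (G.neighborFinset c).card := rfl
  rw [h4, ← Finset.card_univ]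
  omega

end Aux

/-- Edge bounds for a `K_3`-saturated graph with minimum degree `δ ≥ 3`, where `t` is the
minimum degree over vertices adjacent to a vertex of degree `δ`. -/
theorem k3_saturated_min_degree_ge_three_edge_bounds {V : Type} [Fintype V]
    (n δ t : ℕ) (hn : Fintype.card V = n) (G : SimpleGraph V) (hsat : IsK3Saturated G)
    (hδ3 : 3 ≤ δ)
    (hmin : ∀ v, δ ≤ (G.neighborSet v).ncard)
    (hex : ∃ v, (G.neighborSet v).ncard = δ)
    (htex : ∃ v w, G.Adj v w ∧ (G.neighborSet w).ncard = δ ∧ (G.neighborSet v).ncard = t)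
    (htmin : ∀ v w, G.Adj v w → (G.neighborSet w).ncard = δ →
      t ≤ (G.neighborSet v).ncard) :
    ((δ : ℤ) + 1) * n - (δ : ℤ) ^ 2 - 1 ≤ 2 * (G.edgeSet.ncard : ℤ) ∧
    ((δ : ℤ) + 2) * n - (δ : ℤ) * ((δ : ℤ) + (t : ℤ)) - 2 ≤ 2 * (G.edgeSet.ncard : ℤ) := by
  classical
  obtain ⟨hfree, hsat2⟩ := hsat
  have hcn : ∀ a b : V, a ≠ b → ¬ G.Adj a b → ∃ z, G.Adj a z ∧ G.Adj b z :=
    fun a b hab hnadj => common_nbr hfree hsat2 hab hnadj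
  have hdeg : ∀ v, (G.neighborSet v).ncard = G.degree v := fun v => by
    rw [Set.ncard_eq_toFinset_card']
    rfl
  have hE : (G.edgeSet.ncard : ℤ) = (G.edgeFinset.card : ℤ) := by
    rw [Set.ncard_eq_toFinset_card']
    congr 2
  have hmin' : ∀ v, δ ≤ G.degree v := fun v => by rw [← hdeg]; exact hmin v
  obtain ⟨u, w, huw, hw, hu⟩ := htex
  rw [hdeg] at hw hu
  have htδ : δ ≤ t := by rw [← hu]; exact hmin' u
  constructor
  · -- first bound, center w
    have hid := edge_identity hfree w
    have hcA := card_A (G := G) w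
    rw [hw, hn] at hcA
    have hper : ∀ v ∈ univ \ insert w (G.neighborFinset w),
        δ + 1 ≤ G.degree v + (G.neighborFinset v ∩ G.neighborFinset w).card := by
      intro v hv
      have h1 := hmin' v
      have h2 := a_pos hcn w v hv
      omega
    have hsum : (δ + 1) * (univ \ insert w (G.neighborFinset w)).card ≤
        ∑ v ∈ univ \ insert w (G.neighborFinset w),
          (G.degree v + (G.neighborFinset v ∩ G.neighborFinset w).card) := by
      calc (δ + 1) * (univ \ insert w (G.neighborFinset w)).card
          = ∑ _v ∈ univ \ insert w (G.neighborFinset w), (δ + 1) := by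
            rw [Finset.sum_const, smul_eq_mul, mul_comm]
        _ ≤ _ := Finset.sum_le_sum hper
    have h2e : 2 * G.edgeFinset.card = 2 * δ +
        ∑ v ∈ univ \ insert w (G.neighborFinset w),
          (G.degree v + (G.neighborFinset v ∩ G.neighborFinset w).card) := by
      rw [hid, hw]
    have hfin : 2 * δ + (δ + 1) * (univ \ insert w (G.neighborFinset w)).card
        ≤ 2 * G.edgeFinset.card := by omega
    have hcA' : ((univ \ insert w (G.neighborFinset w)).card : ℤ) = (n : ℤ) - (δ : ℤ) - 1 := by
      omega
    have hfin' : 2 * (δ : ℤ) + ((δ : ℤ) + 1) * (((univ \ insert w (G.neighborFinset w)).card : ℕ) : ℤ)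
        ≤ 2 * (G.edgeFinset.card : ℤ) := by exact_mod_cast hfin
    rw [hcA'] at hfin'
    rw [hE]
    nlinarith [hfin']
  · -- second bound, center u
    have hid := edge_identity hfree u
    have hcA := card_A (G := G) u
    rw [hu, hn] at hcA
    have hcore := core_bound hfree hcn huw δ hδ3 hw hmin'
    have hidZ : 2 * (G.edgeFinset.card : ℤ) = 2 * (t : ℤ) +
        ∑ v ∈ univ \ insert u (G.neighborFinset u),
          ((G.degree v : ℤ) + ((G.neighborFinset v ∩ G.neighborFinset u).card : ℤ)) := by
      have : ((2 * G.edgeFinset.card : ℕ) : ℤ) = ((2 * G.degree u +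
          ∑ v ∈ univ \ insert u (G.neighborFinset u),
            (G.degree v + (G.neighborFinset v ∩ G.neighborFinset u).card) : ℕ) : ℤ) := by
        exact_mod_cast hid
      push_cast at this
      rw [this, hu]
    have hcA' : ((univ \ insert u (G.neighborFinset u)).card : ℤ) = (n : ℤ) - (t : ℤ) - 1 := by
      omega
    rw [hcA'] at hcore
    rw [hE, hidZ]
    nlinarith [hcore]
end

section
/- If G is a K_3-saturated graph on n ≥ 5 vertices with minimum degree δ(G) = 2, then e(G) ≥ 2n − 5. -/
open SimpleGraph Finset

private lemma triple_free {V : Type} {G : SimpleGraph V} (hG : G.CliqueFree 3)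
    (x y z : V) (h1 : G.Adj x y) (h2 : G.Adj x z) (h3 : G.Adj y z) : False := by
  classical
  exact hG {x, y, z} (SimpleGraph.is3Clique_triple_iff.2 ⟨h1, h2, h3⟩)

private lemma common_nbr_s10 {V : Type} {G : SimpleGraph V} (hG : G.CliqueFree 3)
    {u w : V} (h : ¬ (G ⊔ fromEdgeSet {s(u, w)}).CliqueFree 3) :
    ∃ x, G.Adj u x ∧ G.Adj w x := by
  classical
  rw [SimpleGraph.CliqueFree] at h
  push_neg at h
  obtain ⟨t, ht⟩ := h
  rw [SimpleGraph.is3Clique_iff] at ht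
  obtain ⟨x, y, z, hxy, hxz, hyz, -⟩ := ht
  have key : ∀ p q : V, (G ⊔ fromEdgeSet {s(u, w)}).Adj p q →
      G.Adj p q ∨ (p = u ∧ q = w) ∨ (p = w ∧ q = u) := by
    intro p q hpq
    rcases hpq with h | h
    · exact Or.inl h
    · rw [SimpleGraph.fromEdgeSet_adj] at h
      obtain ⟨hm, -⟩ := h
      rw [Set.mem_singleton_iff, Sym2.eq_iff] at hm
      tauto
  have hne_xy := hxy.ne
  have hne_xz := hxz.ne
  have hne_yz := hyz.ne
  rcases key x y hxy with h1 | ⟨e1, e2⟩ | ⟨e1, e2⟩ <;>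
    rcases key x z hxz with h2 | ⟨e3, e4⟩ | ⟨e3, e4⟩ <;>
    rcases key y z hyz with h3 | ⟨e5, e6⟩ | ⟨e5, e6⟩ <;>
    subst_vars <;>
    first
      | exact (triple_free hG _ _ _ h1 h2 h3).elim
      | exact absurd rfl hne_xy
      | exact absurd rfl hne_xz
      | exact absurd rfl hne_yz
      | exact (G.loopless _ h1).elim
      | exact (G.loopless _ h2).elim
      | exact (G.loopless _ h3).elim
      | exact ⟨x, h1.symm, h2.symm⟩
      | exact ⟨x, h2.symm, h1.symm⟩
      | exact ⟨y, h1, h3.symm⟩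
      | exact ⟨y, h3.symm, h1⟩
      | exact ⟨y, h1.symm, h3.symm⟩
      | exact ⟨y, h3.symm, h1.symm⟩
      | exact ⟨z, h2, h3⟩
      | exact ⟨z, h3, h2⟩
      | exact ⟨z, h2.symm, h3.symm⟩
      | exact ⟨z, h3.symm, h2.symm⟩
      | exact ⟨x, h1.symm, h3.symm⟩
      | exact ⟨x, h3.symm, h1.symm⟩
      | exact ⟨x, h1.symm, h2⟩
      | exact ⟨x, h2, h1.symm⟩
      | exact ⟨y, h1, h2⟩
      | exact ⟨y, h2, h1⟩
      | exact ⟨z, h2, h3.symm⟩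
      | exact ⟨z, h3.symm, h2⟩
      | simp_all [SimpleGraph.irrefl]

/-- A `K_3`-saturated graph on `n ≥ 5` vertices with minimum degree `2` has at least
`2n - 5` edges. -/
theorem k3_saturated_min_degree_two_edge_bound (n : ℕ) (hn : 5 ≤ n)
    (G : SimpleGraph (Fin n)) (hsat : IsK3Saturated G)
    (hmin : ∀ v, 2 ≤ (G.neighborSet v).ncard)
    (hex : ∃ v, (G.neighborSet v).ncard = 2) :
    2 * n - 5 ≤ G.edgeSet.ncard := by
  classical
  obtain ⟨hfree, hsat2⟩ := hsat
  have hcn : ∀ u w : Fin n, u ≠ w → ¬ G.Adj u w → ∃ x, G.Adj u x ∧ G.Adj w x :=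
    fun u w h1 h2 => common_nbr_s10 hfree (hsat2 u w h1 h2)
  obtain ⟨v, hv⟩ := hex
  letI : DecidableRel G.Adj := Classical.decRel _
  have hncard : ∀ x : Fin n, (G.neighborSet x).ncard = G.degree x := by
    intro x
    rw [Set.ncard_eq_toFinset_card']
    congr 1
  have hdegv : G.degree v = 2 := by rw [← hncard]; exact hv
  have hmin' : ∀ x : Fin n, 2 ≤ G.degree x := fun x => by rw [← hncard]; exact hmin x
  obtain ⟨a, b, hab', hNv⟩ := Finset.card_eq_two.1 hdegv
  have hva : G.Adj v a := by
    have h : a ∈ G.neighborFinset v := hNv ▸ Finset.mem_insert_self a {b}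
    exact (SimpleGraph.mem_neighborFinset ..).1 h
  have hvb : G.Adj v b := by
    have h : b ∈ G.neighborFinset v :=
      hNv ▸ Finset.mem_insert_of_mem (Finset.mem_singleton_self b)
    exact (SimpleGraph.mem_neighborFinset ..).1 h
  have hAdjv : ∀ x : Fin n, G.Adj v x ↔ (x = a ∨ x = b) := by
    intro x
    rw [← SimpleGraph.mem_neighborFinset, hNv, Finset.mem_insert, Finset.mem_singleton]
  have hab : ¬ G.Adj a b := fun h => triple_free hfree v a b hva hvb h
  set A : Finset (Fin n) := (G.neighborFinset a).erase v with hA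
  set B : Finset (Fin n) := (G.neighborFinset b).erase v with hB
  have hmemA : ∀ x, x ∈ A ↔ (x ≠ v ∧ G.Adj a x) := by
    intro x; rw [hA, Finset.mem_erase, SimpleGraph.mem_neighborFinset]
  have hmemB : ∀ x, x ∈ B ↔ (x ≠ v ∧ G.Adj b x) := by
    intro x; rw [hB, Finset.mem_erase, SimpleGraph.mem_neighborFinset]
  have hanA : a ∉ A := fun h => G.loopless.irrefl a ((hmemA a).1 h).2
  have hbnB : b ∉ B := fun h => G.loopless.irrefl b ((hmemB b).1 h).2
  have hanB : a ∉ B := fun h => hab (((hmemB a).1 h).2).symm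
  have hbnA : b ∉ A := fun h => hab (((hmemA b).1 h).2)
  have hvnA : v ∉ A := Finset.notMem_erase v _
  have hvnB : v ∉ B := Finset.notMem_erase v _
  have hcov : ∀ x : Fin n, x ≠ v → x ≠ a → x ≠ b → x ∈ A ∨ x ∈ B := by
    intro x h1 h2 h3
    by_cases hadj : G.Adj v x
    · rcases (hAdjv x).1 hadj with rfl | rfl
      · exact absurd rfl h2
      · exact absurd rfl h3
    · obtain ⟨y, hy1, hy2⟩ := hcn v x (Ne.symm h1) hadj
      rcases (hAdjv y).1 hy1 with rfl | rfl
      · exact Or.inl ((hmemA x).2 ⟨h1, hy2.symm⟩)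
      · exact Or.inr ((hmemB x).2 ⟨h1, hy2.symm⟩)
  set A' : Finset (Fin n) := A \ B with hA'
  set B' : Finset (Fin n) := B \ A with hB'
  set C : Finset (Fin n) := A ∩ B with hC
  -- neighborhoods of A' vertices
  have hNA' : ∀ w ∈ A', ∀ x, G.Adj w x → x = a ∨ x ∈ B' := by
    intro w hw x hwx
    rw [hA', Finset.mem_sdiff] at hw
    obtain ⟨hwA, hwnB⟩ := hw
    obtain ⟨hwv, haw⟩ := (hmemA w).1 hwA
    have hwb : ¬ G.Adj b w := fun h => hwnB ((hmemB w).2 ⟨hwv, h⟩)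
    have hwa : w ≠ a := fun h => G.loopless.irrefl a (h ▸ haw)
    by_cases hxa : x = a
    · exact Or.inl hxa
    have hxv : x ≠ v := by
      rintro rfl
      rcases (hAdjv w).1 hwx.symm with h | h
      · exact hwa h
      · exact hbnA (h ▸ hwA)
    have hxb : x ≠ b := by
      rintro rfl
      exact hwb hwx.symm
    have hxnA : x ∉ A := by
      intro hxA
      exact triple_free hfree a w x haw ((hmemA x).1 hxA).2 hwx
    rcases hcov x hxv hxa hxb with h | h
    · exact absurd h hxnA
    · exact Or.inr (by rw [hB', Finset.mem_sdiff]; exact ⟨h, hxnA⟩)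
  have hNB' : ∀ w ∈ B', ∀ x, G.Adj w x → x = b ∨ x ∈ A' := by
    intro w hw x hwx
    rw [hB', Finset.mem_sdiff] at hw
    obtain ⟨hwB, hwnA⟩ := hw
    obtain ⟨hwv, hbw⟩ := (hmemB w).1 hwB
    have hwa : ¬ G.Adj a w := fun h => hwnA ((hmemA w).2 ⟨hwv, h⟩)
    have hwb : w ≠ b := fun h => G.loopless.irrefl b (h ▸ hbw)
    by_cases hxb : x = b
    · exact Or.inl hxb
    have hxv : x ≠ v := by
      rintro rfl
      rcases (hAdjv w).1 hwx.symm with h | h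
      · exact hanB (h ▸ hwB)
      · exact hwb h
    have hxa : x ≠ a := by
      rintro rfl
      exact hwa hwx.symm
    have hxnB : x ∉ B := by
      intro hxB
      exact triple_free hfree b w x hbw ((hmemB x).1 hxB).2 hwx
    rcases hcov x hxv hxa hxb with h | h
    · exact Or.inr (by rw [hA', Finset.mem_sdiff]; exact ⟨h, hxnB⟩)
    · exact absurd h hxnB
  -- complete bipartite between A' and B'
  have hbip : ∀ w ∈ A', ∀ u ∈ B', G.Adj w u := by
    intro w hw u hu
    by_contra hnadj
    have hwu : w ≠ u := by
      rintro rfl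
      rw [hA', Finset.mem_sdiff] at hw
      rw [hB', Finset.mem_sdiff] at hu
      exact hw.2 hu.1
    obtain ⟨x, hx1, hx2⟩ := hcn w u hwu hnadj
    rcases hNA' w hw x hx1 with rfl | hxB'
    · -- x = a, so u is adjacent to a, hence u ∈ A, contradiction
      rw [hB', Finset.mem_sdiff] at hu
      have huv : u ≠ v := ((hmemB u).1 hu.1).1
      exact hu.2 ((hmemA u).2 ⟨huv, hx2.symm⟩)
    · rcases hNB' u hu x hx2 with rfl | hxA'
      · rw [hA', Finset.mem_sdiff] at hw
        have hwv : w ≠ v := ((hmemA w).1 hw.1).1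
        exact hw.2 ((hmemB w).2 ⟨hwv, hx1.symm⟩)
      · rw [hA', Finset.mem_sdiff] at hxA'
        rw [hB', Finset.mem_sdiff] at hxB'
        exact hxA'.2 hxB'.1
  -- degree lower bounds
  have hanB' : a ∉ B' := fun h => hanB (Finset.mem_sdiff.1 h).1
  have hbnA' : b ∉ A' := fun h => hbnA (Finset.mem_sdiff.1 h).1
  have hdegA' : ∀ w ∈ A', B'.card + 1 ≤ G.degree w := by
    intro w hw
    have hsub : insert a B' ⊆ G.neighborFinset w := by
      intro x hx
      rcases Finset.mem_insert.1 hx with rfl | hx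
      · exact (SimpleGraph.mem_neighborFinset ..).2
          (((hmemA w).1 (Finset.mem_sdiff.1 hw).1).2).symm
      · exact (SimpleGraph.mem_neighborFinset ..).2 (hbip w hw x hx)
    calc B'.card + 1 = (insert a B').card := (Finset.card_insert_of_notMem hanB').symm
      _ ≤ (G.neighborFinset w).card := Finset.card_le_card hsub
  have hdegB' : ∀ u ∈ B', A'.card + 1 ≤ G.degree u := by
    intro u hu
    have hsub : insert b A' ⊆ G.neighborFinset u := by
      intro x hx
      rcases Finset.mem_insert.1 hx with rfl | hx
      · exact (SimpleGraph.mem_neighborFinset ..).2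
          (((hmemB u).1 (Finset.mem_sdiff.1 hu).1).2).symm
      · exact (SimpleGraph.mem_neighborFinset ..).2 (hbip x hx u hu).symm
    calc A'.card + 1 = (insert b A').card := (Finset.card_insert_of_notMem hbnA').symm
      _ ≤ (G.neighborFinset u).card := Finset.card_le_card hsub
  have hdega : G.degree a = A.card + 1 := by
    have hvmem : v ∈ G.neighborFinset a := (SimpleGraph.mem_neighborFinset ..).2 hva.symm
    have : G.neighborFinset a = insert v A := (Finset.insert_erase hvmem).symm
    rw [SimpleGraph.degree, this, Finset.card_insert_of_notMem hvnA]
  have hdegb : G.degree b = B.card + 1 := by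
    have hvmem : v ∈ G.neighborFinset b := (SimpleGraph.mem_neighborFinset ..).2 hvb.symm
    have : G.neighborFinset b = insert v B := (Finset.insert_erase hvmem).symm
    rw [SimpleGraph.degree, this, Finset.card_insert_of_notMem hvnB]
  -- if one of A', B' is empty so is the other
  have hempty1 : A' = ∅ → B' = ∅ := by
    intro h
    by_contra hne
    obtain ⟨u, hu⟩ := Finset.nonempty_of_ne_empty hne
    have hsub : G.neighborFinset u ⊆ {b} := by
      intro x hx
      rcases hNB' u hu x ((SimpleGraph.mem_neighborFinset ..).1 hx) with rfl | hx'
      · exact Finset.mem_singleton_self _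
      · rw [h] at hx'; exact absurd hx' (Finset.notMem_empty x)
    have := Finset.card_le_card hsub
    rw [Finset.card_singleton] at this
    have h2 := hmin' u
    rw [SimpleGraph.degree] at h2
    omega
  have hempty2 : B' = ∅ → A' = ∅ := by
    intro h
    by_contra hne
    obtain ⟨u, hu⟩ := Finset.nonempty_of_ne_empty hne
    have hsub : G.neighborFinset u ⊆ {a} := by
      intro x hx
      rcases hNA' u hu x ((SimpleGraph.mem_neighborFinset ..).1 hx) with rfl | hx'
      · exact Finset.mem_singleton_self _
      · rw [h] at hx'; exact absurd hx' (Finset.notMem_empty x)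
    have := Finset.card_le_card hsub
    rw [Finset.card_singleton] at this
    have h2 := hmin' u
    rw [SimpleGraph.degree] at h2
    omega
  -- partition of the vertex set
  have hvna : v ≠ a := G.ne_of_adj hva
  have hvnb : v ≠ b := G.ne_of_adj hvb
  have hD1 : Disjoint A' B' := disjoint_sdiff_sdiff
  have hD2 : Disjoint (A' ∪ B') C := by
    rw [Finset.disjoint_union_left]
    constructor
    · exact Finset.disjoint_left.2 fun x hx hx2 =>
        (Finset.mem_sdiff.1 hx).2 (Finset.mem_inter.1 hx2).2
    · exact Finset.disjoint_left.2 fun x hx hx2 =>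
        (Finset.mem_sdiff.1 hx).2 (Finset.mem_inter.1 hx2).1
  have hUAB : A' ∪ B' ∪ C ⊆ A ∪ B := by
    intro x hx
    rcases Finset.mem_union.1 hx with hx | hx
    · rcases Finset.mem_union.1 hx with hx | hx
      · exact Finset.mem_union_left _ (Finset.mem_sdiff.1 hx).1
      · exact Finset.mem_union_right _ (Finset.mem_sdiff.1 hx).1
    · exact Finset.mem_union_left _ (Finset.mem_inter.1 hx).1
  have hbnU : b ∉ A' ∪ B' ∪ C := fun h => by
    rcases Finset.mem_union.1 (hUAB h) with h | h
    · exact hbnA h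
    · exact hbnB h
  have hanU : a ∉ insert b (A' ∪ B' ∪ C) := by
    intro h
    rcases Finset.mem_insert.1 h with h | h
    · exact hab' h
    · rcases Finset.mem_union.1 (hUAB h) with h | h
      · exact hanA h
      · exact hanB h
  have hvnU : v ∉ insert a (insert b (A' ∪ B' ∪ C)) := by
    intro h
    rcases Finset.mem_insert.1 h with h | h
    · exact hvna h
    rcases Finset.mem_insert.1 h with h | h
    · exact hvnb h
    rcases Finset.mem_union.1 (hUAB h) with h | h
    · exact hvnA h
    · exact hvnB h
  have huniv : (Finset.univ : Finset (Fin n)) = insert v (insert a (insert b (A' ∪ B' ∪ C))) := by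
    ext x
    simp only [Finset.mem_univ, true_iff, Finset.mem_insert]
    by_cases h1 : x = v
    · exact Or.inl h1
    by_cases h2 : x = a
    · exact Or.inr (Or.inl h2)
    by_cases h3 : x = b
    · exact Or.inr (Or.inr (Or.inl h3))
    refine Or.inr (Or.inr (Or.inr ?_))
    rcases hcov x h1 h2 h3 with h | h
    · by_cases hxB : x ∈ B
      · exact Finset.mem_union_right _ (Finset.mem_inter.2 ⟨h, hxB⟩)
      · exact Finset.mem_union_left _ (Finset.mem_union_left _ (Finset.mem_sdiff.2 ⟨h, hxB⟩))
    · by_cases hxA : x ∈ A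
      · exact Finset.mem_union_right _ (Finset.mem_inter.2 ⟨hxA, h⟩)
      · exact Finset.mem_union_left _ (Finset.mem_union_right _ (Finset.mem_sdiff.2 ⟨h, hxA⟩))
  set p := A'.card with hp
  set q := B'.card with hq
  set r := C.card with hr
  have hcardU : (A' ∪ B' ∪ C).card = p + q + r := by
    rw [Finset.card_union_of_disjoint hD2, Finset.card_union_of_disjoint hD1]
  have hcardn : n = 3 + (p + q + r) := by
    have := congrArg Finset.card huniv
    rw [Finset.card_univ, Fintype.card_fin,
      Finset.card_insert_of_notMem hvnU, Finset.card_insert_of_notMem hanU,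
      Finset.card_insert_of_notMem hbnU, hcardU] at this
    omega
  have hAcard : A.card = p + r := by
    have : A' ∪ C = A := by rw [hA', hC]; exact Finset.sdiff_union_inter A B
    have hD : Disjoint A' C := by rw [hA', hC]; exact Finset.disjoint_sdiff_inter A B
    rw [← this, Finset.card_union_of_disjoint hD]
  have hBcard : B.card = q + r := by
    have h1 : B' ∪ B ∩ A = B := Finset.sdiff_union_inter B A
    have hD : Disjoint B' (B ∩ A) := Finset.disjoint_sdiff_inter B A
    have h2 : (B ∩ A).card = r := by rw [Finset.inter_comm]
    calc B.card = (B' ∪ B ∩ A).card := by rw [h1]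
      _ = B'.card + (B ∩ A).card := Finset.card_union_of_disjoint hD
      _ = q + r := by rw [h2]
  -- sum of degrees
  have hsum : ∑ x, G.degree x = 2 * G.edgeFinset.card :=
    SimpleGraph.sum_degrees_eq_twice_card_edges G
  have hsumsplit : ∑ x, G.degree x =
      G.degree v + G.degree a + G.degree b + (∑ x ∈ A', G.degree x)
        + (∑ x ∈ B', G.degree x) + (∑ x ∈ C, G.degree x) := by
    rw [huniv, Finset.sum_insert hvnU, Finset.sum_insert hanU, Finset.sum_insert hbnU,
      Finset.sum_union hD2, Finset.sum_union hD1]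
    ring
  have hSA' : p * (q + 1) ≤ ∑ x ∈ A', G.degree x := by
    have := Finset.card_nsmul_le_sum A' (fun x => G.degree x) (q + 1)
      (fun x hx => hdegA' x hx)
    simpa [smul_eq_mul] using this
  have hSB' : q * (p + 1) ≤ ∑ x ∈ B', G.degree x := by
    have := Finset.card_nsmul_le_sum B' (fun x => G.degree x) (p + 1)
      (fun x hx => hdegB' x hx)
    simpa [smul_eq_mul] using this
  have hSC : r * 2 ≤ ∑ x ∈ C, G.degree x := by
    have := Finset.card_nsmul_le_sum C (fun x => G.degree x) 2
      (fun x _ => hmin' x)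
    simpa [smul_eq_mul] using this
  have hE : G.edgeSet.ncard = G.edgeFinset.card := by
    rw [← Set.ncard_coe_finset G.edgeFinset, SimpleGraph.coe_edgeFinset]
  set E := G.edgeFinset.card with hEdef
  have hmain : 2 + (p + r + 1) + (q + r + 1) + p * (q + 1) + q * (p + 1) + r * 2 ≤ 2 * E := by
    rw [← hsum, hsumsplit, hdegv, hdega, hdegb, hAcard, hBcard]
    have := hSA'
    have := hSB'
    have := hSC
    omega
  rw [hE]
  -- case analysis on whether A' (equivalently B') is empty
  by_cases hp0 : p = 0
  · have hq0 : q = 0 := by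
      rw [hq, hempty1 (Finset.card_eq_zero.1 (hp ▸ hp0)), Finset.card_empty]
    rw [hp0, hq0] at hmain hcardn
    norm_num at hmain hcardn
    omega
  · have hq0 : q ≠ 0 := by
      intro h
      exact hp0 (by rw [hp, hempty2 (Finset.card_eq_zero.1 (hq ▸ h)), Finset.card_empty])
    obtain ⟨p', hp'⟩ := Nat.exists_eq_succ_of_ne_zero hp0
    obtain ⟨q', hq'⟩ := Nat.exists_eq_succ_of_ne_zero hq0
    have hpq : p + q ≤ p * q + 1 := by
      rw [hp', hq']
      have h3 : (p' + 1) * (q' + 1) + 1 = p' * q' + (p' + 1 + (q' + 1)) := by ring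
      rw [h3]
      exact Nat.le_add_left _ _
    have h1 : p * (q + 1) = p * q + p := by ring
    have h2 : q * (p + 1) = p * q + q := by ring
    rw [h1, h2] at hmain
    set m := p * q with hm
    omega
end

section
/- For all integers t ≥ 1 and m_1, …, m_t ≥ 1 and every integer n > 3(m_1 + ⋯ + m_t − t), the saturation number sat(n, R_min(m_1·K_2, …, m_t·K_2)) equals 3(m_1 + ⋯ + m_t − t); that is, every R_min(m_1·K_2, …, m_t·K_2)-saturated graph on n vertices has at least 3(m_1 + ⋯ + m_t − t) edges, and some R_min(m_1·K_2, …, m_t·K_2)-saturated graph on n vertices has exactly that many edges. -/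
open SimpleGraph

/-- A `t`-edge-coloring `c` of `G` is bad w.r.t. `(m_1·K_2, …, m_t·K_2)` if, for each color
`i`, the edges of color `i` contain no `m i` pairwise disjoint edges. -/
def IsBadMatchingColoring {V : Type} (t : ℕ) (m : Fin t → ℕ) (G : SimpleGraph V)
    (c : Sym2 V → Fin t) : Prop :=
  ∀ i : Fin t, ¬ ∃ s : Finset (Sym2 V),
    (∀ e ∈ s, e ∈ G.edgeSet ∧ c e = i) ∧ s.card = m i ∧
    (∀ e ∈ s, ∀ f ∈ s, e ≠ f → ∀ v : V, v ∈ e → v ∉ f)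

/-- `G` is `R_min(m_1·K_2, …, m_t·K_2)`-saturated. -/
def IsRminMatchingSat {V : Type} (t : ℕ) (m : Fin t → ℕ) (G : SimpleGraph V) : Prop :=
  (∃ c : Sym2 V → Fin t, IsBadMatchingColoring t m G c) ∧
    ∀ u v : V, u ≠ v → ¬ G.Adj u v →
      ∀ c : Sym2 V → Fin t, ¬ IsBadMatchingColoring t m (G ⊔ fromEdgeSet {s(u, v)}) c

open Finset
open scoped Classical
set_option linter.unusedSectionVars false
set_option linter.unusedVariables false
set_option maxHeartbeats 1600000

namespace SatProof

variable {V : Type} [Fintype V] [DecidableEq V]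

def IsMat (A M : Finset (Sym2 V)) : Prop :=
  M ⊆ A ∧ ∀ e ∈ M, ∀ f ∈ M, e ≠ f → ∀ x : V, x ∈ e → x ∉ f

def cov (M : Finset (Sym2 V)) (x : V) : Prop := ∃ e ∈ M, x ∈ e

lemma mem_exists_other {x : V} {e : Sym2 V} (hx : x ∈ e) (hnd : ¬e.IsDiag) :
    ∃ y, y ≠ x ∧ e = s(x, y) := by
  induction e with
  | _ a b =>
    rw [Sym2.mem_iff] at hx
    rw [Sym2.mk_isDiag_iff] at hnd
    rcases hx with rfl | rfl
    · exact ⟨b, fun h => hnd h.symm, rfl⟩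
    · exact ⟨a, hnd, Sym2.eq_swap⟩

lemma IsMat.subset {A M M' : Finset (Sym2 V)} (h : IsMat A M) (hsub : M' ⊆ M) :
    IsMat A M' :=
  ⟨hsub.trans h.1, fun e he f hf hne => h.2 e (hsub he) f (hsub hf) hne⟩

lemma IsMat.eq_of_mem {A M : Finset (Sym2 V)} (h : IsMat A M) {e f : Sym2 V} {x : V}
    (he : e ∈ M) (hf : f ∈ M) (hxe : x ∈ e) (hxf : x ∈ f) : e = f := by
  by_contra hne
  exact h.2 e he f hf hne x hxe hxf

lemma IsMat.insertMat {A M : Finset (Sym2 V)} (h : IsMat A M) {e : Sym2 V}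
    (heA : e ∈ A) (hdisj : ∀ x ∈ e, ¬cov M x) : IsMat A (insert e M) := by
  constructor
  · exact Finset.insert_subset heA h.1
  · intro a ha b hb hne x hxa hxb
    rcases Finset.mem_insert.mp ha with rfl | ha'
    · rcases Finset.mem_insert.mp hb with rfl | hb'
      · exact absurd rfl hne
      · exact hdisj x hxa ⟨b, hb', hxb⟩
    · rcases Finset.mem_insert.mp hb with rfl | hb'
      · exact hdisj x hxb ⟨a, ha', hxa⟩
      · exact h.2 a ha' b hb' hne x hxa hxb

lemma not_mem_of_uncov {M : Finset (Sym2 V)} {e : Sym2 V} {x : V}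
    (hx : x ∈ e) (hcov : ¬cov M x) : e ∉ M := fun he => hcov ⟨e, he, hx⟩

lemma card_insertMat {M : Finset (Sym2 V)} {e : Sym2 V} {x : V}
    (hx : x ∈ e) (hcov : ¬cov M x) : (insert e M).card = M.card + 1 :=
  Finset.card_insert_of_notMem (fun he => hcov ⟨e, he, hx⟩)

lemma cov_mono {M M' : Finset (Sym2 V)} {x : V} (h : M' ⊆ M) (hc : cov M' x) : cov M x := by
  obtain ⟨e, he, hx⟩ := hc; exact ⟨e, h he, hx⟩

/-- **Gallai-type exchange lemma.** If all matchings in `A` have size at most `snum`,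
and every vertex is avoided by some maximum matching, then no maximum matching exposes
two distinct vertices in the same component of the graph spanned by `A`. -/
theorem claimA (A : Finset (Sym2 V)) (snum : ℕ)
    (hnd : ∀ e ∈ A, ¬e.IsDiag)
    (hmax : ∀ M, IsMat A M → M.card ≤ snum)
    (hav : ∀ x : V, ∃ N, IsMat A N ∧ N.card = snum ∧ ¬cov N x) :
    ∀ (M : Finset (Sym2 V)) (u v : V), IsMat A M → M.card = snum → ¬cov M u → ¬cov M v →
      u ≠ v → ¬(SimpleGraph.fromEdgeSet (A : Set (Sym2 V))).Reachable u v := by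
  classical
  set GA := SimpleGraph.fromEdgeSet (A : Set (Sym2 V)) with hGA
  have hadjA : ∀ {a b : V}, GA.Adj a b → s(a, b) ∈ A ∧ a ≠ b := by
    intro a b h
    rw [hGA, SimpleGraph.fromEdgeSet_adj] at h
    exact ⟨h.1, h.2⟩
  -- adding an edge between two exposed vertices contradicts maximality
  have hd1 : ∀ (M' : Finset (Sym2 V)) (a b : V), IsMat A M' → M'.card = snum →
      ¬cov M' a → ¬cov M' b → GA.Adj a b → False := by
    intro M' a b hM' hc ha hb hadj
    obtain ⟨hab, hne⟩ := hadjA hadj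
    have hins : IsMat A (insert s(a, b) M') := by
      refine hM'.insertMat hab ?_
      intro p hp
      rw [Sym2.mem_iff] at hp
      rcases hp with rfl | rfl
      · exact ha
      · exact hb
    have := hmax _ hins
    rw [card_insertMat (Sym2.mem_mk_left a b) ha, hc] at this
    omega
  suffices key : ∀ d (M : Finset (Sym2 V)) (u v : V), IsMat A M → M.card = snum →
      ¬cov M u → ¬cov M v → u ≠ v → GA.Reachable u v → GA.dist u v = d → False by
    intro M u v hM hc hu hv huv hreach
    exact key (GA.dist u v) M u v hM hc hu hv huv hreach rfl
  intro d
  induction d using Nat.strong_induction_on with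
  | _ d IH =>
  intro M u v hM hcard hu hv huv hreach hdist
  have hdpos : 0 < d := hdist ▸ hreach.pos_dist_of_ne huv
  by_cases hd2 : d < 2
  · -- d = 1 : u,v adjacent, contradiction
    have h1 : GA.dist u v = 1 := by omega
    exact hd1 M u v hM hcard hu hv (SimpleGraph.dist_eq_one_iff_adj.mp h1)
  push_neg at hd2
  obtain ⟨p, hp⟩ := hreach.exists_walk_length_eq_dist
  rw [hdist] at hp
  cases p with
  | nil => rw [SimpleGraph.Walk.length_nil] at hp; omega
  | @cons _ w _ hadj q =>
    rw [SimpleGraph.Walk.length_cons] at hp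
    obtain ⟨hsuw, hub⟩ := hadjA hadj
    have hwv : w ≠ v := by
      rintro rfl
      have : GA.dist u w = 1 := SimpleGraph.dist_eq_one_iff_adj.mpr hadj
      omega
    have hdistwv : GA.dist w v < d := by
      have := SimpleGraph.dist_le q
      omega
    have hreachwv : GA.Reachable w v := q.reachable
    have hcovw : cov M w := by
      by_contra hcw
      exact IH 1 (by omega) M u w hM hcard hu hcw hub hadj.reachable
        (SimpleGraph.dist_eq_one_iff_adj.mpr hadj)
    -- choose N : max matching missing w, maximizing |N ∩ M|
    obtain ⟨N, hNtriple, hNbest⟩ :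
        ∃ N, (IsMat A N ∧ N.card = snum ∧ ¬cov N w) ∧
          ∀ N', (IsMat A N' ∧ N'.card = snum ∧ ¬cov N' w) → (N' ∩ M).card ≤ (N ∩ M).card := by
      obtain ⟨N₀, h₀⟩ := hav w
      set fam : Finset (Finset (Sym2 V)) :=
        A.powerset.filter (fun N => IsMat A N ∧ N.card = snum ∧ ¬cov N w) with hfam
      have hmem : ∀ {N}, N ∈ fam ↔ (IsMat A N ∧ N.card = snum ∧ ¬cov N w) := by
        intro N
        rw [hfam, Finset.mem_filter, Finset.mem_powerset]
        exact ⟨fun h => h.2, fun h => ⟨h.1.1, h⟩⟩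
      obtain ⟨N, hN, hbest⟩ := Finset.exists_max_image fam (fun N => (N ∩ M).card)
        ⟨N₀, hmem.mpr h₀⟩
      exact ⟨N, hmem.mp hN, fun N' hN' => hbest N' (hmem.mpr hN')⟩
    obtain ⟨hNmat, hNcard, hNw⟩ := hNtriple
    have hcovNu : cov N u := by
      by_contra hcu
      exact hd1 N u w hNmat hNcard hcu hNw hadj
    have hcovNv : cov N v := by
      by_contra hcv
      exact IH (GA.dist w v) hdistwv N w v hNmat hNcard hNw hcv hwv hreachwv rfl
    -- the alternating-path recursion
    have REC : ∀ r (M' E F : Finset (Sym2 V)) (x : V), (N \ M').card = r →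
        M' = (M \ F) ∪ E → IsMat A M' → M'.card = snum →
        ¬cov M' x → ¬cov M' v → x ≠ v →
        E ⊆ N → (∀ e ∈ E, e ∉ M) → F ⊆ M → (∀ f ∈ F, f ∉ N) → E.card = F.card →
        (∀ f ∈ F, ∀ p, p ∈ f → (∃ e ∈ E, p ∈ e) ∨ p = x) →
        (∀ f ∈ F, w ∉ f) →
        (F.Nonempty ∨ cov N x) → False := by
      intro r
      induction r using Nat.strong_induction_on with
      | _ r IHr =>
      intro M' E F x hr hM'eq hM' hM'card hM'x hM'v hxv hEN hEM hFM hFN hEF hi5 hi6 hstart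
      by_cases hxw : x = w
      · subst hxw
        exact IH (GA.dist x v) hdistwv M' x v hM' hM'card hM'x hM'v hxv hreachwv rfl
      by_cases hNx : cov N x
      · -- continue along the path
        obtain ⟨e', he'N, hxe'⟩ := hNx
        obtain ⟨y, hyx, he'eq⟩ := mem_exists_other hxe' (hnd e' (hNmat.1 he'N))
        have hye' : y ∈ e' := he'eq ▸ Sym2.mem_mk_right x y
        have he'M' : e' ∉ M' := not_mem_of_uncov hxe' hM'x
        by_cases hcy : cov M' y
        case neg =>
          -- augment : contradiction with hmax
          have hins : IsMat A (insert e' M') := by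
            refine hM'.insertMat (hNmat.1 he'N) ?_
            intro p hp
            rw [he'eq, Sym2.mem_iff] at hp
            rcases hp with rfl | rfl
            · exact hM'x
            · exact hcy
          have := hmax _ hins
          rw [card_insertMat hxe' hM'x, hM'card] at this
          omega
        obtain ⟨f', hf'M', hyf'⟩ := hcy
        have hf'ne : f' ≠ e' := fun h => he'M' (h ▸ hf'M')
        have hf'N : f' ∉ N := by
          intro hf'N
          exact hNmat.2 f' hf'N e' he'N hf'ne y hyf' hye'
        have hf'MF : f' ∈ M \ F := by
          have h1 : f' ∈ (M \ F) ∪ E := hM'eq ▸ hf'M'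
          rcases Finset.mem_union.mp h1 with h | h
          · exact h
          · exact absurd (hEN h) hf'N
        obtain ⟨y', hy'y, hf'eq⟩ := mem_exists_other hyf' (hnd f' (hM'.1 hf'M'))
        have hy'f' : y' ∈ f' := hf'eq ▸ Sym2.mem_mk_right y y'
        have hy'x : y' ≠ x := fun h => hM'x ⟨f', hf'M', h ▸ hy'f'⟩
        have hy'v : y' ≠ v := fun h => hM'v ⟨f', hf'M', h ▸ hy'f'⟩
        have hyw : y ≠ w := fun h => hNw ⟨e', he'N, h ▸ hye'⟩
        set M₁ := insert e' (M'.erase f') with hM₁def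
        have hM₁ : IsMat A M₁ := by
          refine (hM'.subset (Finset.erase_subset f' M')).insertMat (hNmat.1 he'N) ?_
          intro p hp
          rw [he'eq, Sym2.mem_iff] at hp
          rcases hp with rfl | rfl
          · intro hc; exact hM'x (cov_mono (Finset.erase_subset f' M') hc)
          · rintro ⟨g, hg, hpg⟩
            have hgM' : g ∈ M' := Finset.mem_of_mem_erase hg
            have : g = f' := hM'.eq_of_mem hgM' hf'M' hpg hyf'
            exact (Finset.ne_of_mem_erase hg) this
        have hM₁card : M₁.card = snum := by
          have h1 : e' ∉ M'.erase f' := fun h => he'M' (Finset.mem_of_mem_erase h)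
          have h2 : 1 ≤ M'.card := Finset.card_pos.mpr ⟨f', hf'M'⟩
          rw [hM₁def, Finset.card_insert_of_notMem h1, Finset.card_erase_of_mem hf'M', hM'card]
          omega
        have hM₁v : ¬cov M₁ v := by
          rintro ⟨g, hg, hvg⟩
          rcases Finset.mem_insert.mp hg with rfl | hg'
          · rw [he'eq, Sym2.mem_iff] at hvg
            rcases hvg with rfl | rfl
            · exact hxv rfl
            · exact hM'v ⟨f', hf'M', hyf'⟩
          · exact hM'v ⟨g, Finset.mem_of_mem_erase hg', hvg⟩
        have hM₁y' : ¬cov M₁ y' := by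
          rintro ⟨g, hg, hvg⟩
          rcases Finset.mem_insert.mp hg with rfl | hg'
          · rw [he'eq, Sym2.mem_iff] at hvg
            rcases hvg with rfl | rfl
            · exact hy'x rfl
            · exact hy'y rfl
          · have hgM' : g ∈ M' := Finset.mem_of_mem_erase hg'
            have : g = f' := hM'.eq_of_mem hgM' hf'M' hvg hy'f'
            exact (Finset.ne_of_mem_erase hg') this
        by_cases hy'w : y' = w
        · subst hy'w
          exact IH (GA.dist y' v) hdistwv M₁ y' v hM₁ hM₁card hM₁y' hM₁v hy'v hreachwv rfl
        · -- recurse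
          have he'E : e' ∉ E := fun h => he'M' (hM'eq ▸ Finset.mem_union_right _ h)
          have he'M : e' ∉ M := by
            intro he'M
            have he'F : e' ∉ F := fun hF => (hFN e' hF) he'N
            exact he'M' (hM'eq ▸ Finset.mem_union_left _ (Finset.mem_sdiff.mpr ⟨he'M, he'F⟩))
          have hf'F : f' ∉ F := (Finset.mem_sdiff.mp hf'MF).2
          have hf'M : f' ∈ M := (Finset.mem_sdiff.mp hf'MF).1
          have hmeasure : N \ M₁ = (N \ M').erase e' := by
            ext g
            simp only [hM₁def, Finset.mem_sdiff, Finset.mem_erase, Finset.mem_insert]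
            constructor
            · rintro ⟨hgN, hgnot⟩
              push_neg at hgnot
              obtain ⟨hge', hg2⟩ := hgnot
              refine ⟨hge', hgN, fun hgM' => ?_⟩
              have hgf' : g ≠ f' := fun h => hf'N (h ▸ hgN)
              exact hg2 hgf' hgM'
            · rintro ⟨hge', hgN, hgM'⟩
              refine ⟨hgN, ?_⟩
              push_neg
              exact ⟨hge', fun _ => hgM'⟩
          have he'NM' : e' ∈ N \ M' := Finset.mem_sdiff.mpr ⟨he'N, he'M'⟩
          have hrlt : ((N \ M').erase e').card < r := by
            rw [← hr]
            exact Finset.card_erase_lt_of_mem he'NM'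
          have hM₁eq : M₁ = (M \ insert f' F) ∪ insert e' E := by
            ext g
            simp only [hM₁def, Finset.mem_insert, Finset.mem_erase, Finset.mem_union,
              Finset.mem_sdiff, hM'eq]
            constructor
            · rintro (rfl | ⟨hgf', (⟨hgM, hgF⟩ | hgE)⟩)
              · exact Or.inr (Or.inl rfl)
              · exact Or.inl ⟨hgM, by simp [hgf', hgF]⟩
              · exact Or.inr (Or.inr hgE)
            · rintro (⟨hgM, hgnot⟩ | (rfl | hgE))
              · simp only [Finset.mem_insert, not_or] at hgnot
                exact Or.inr ⟨hgnot.1, Or.inl ⟨hgM, hgnot.2⟩⟩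
              · exact Or.inl rfl
              · refine Or.inr ⟨fun h => (hEM g hgE) (h ▸ hf'M), Or.inr hgE⟩
          refine IHr ((N \ M').erase e').card hrlt M₁ (insert e' E) (insert f' F) y'
            (by rw [hmeasure]) hM₁eq hM₁ hM₁card hM₁y' hM₁v hy'v ?_ ?_ ?_ ?_ ?_ ?_ ?_ ?_
          · exact Finset.insert_subset he'N hEN
          · intro g hg
            rcases Finset.mem_insert.mp hg with rfl | hg'
            · exact he'M
            · exact hEM g hg'
          · exact Finset.insert_subset hf'M hFM
          · intro g hg
            rcases Finset.mem_insert.mp hg with rfl | hg'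
            · exact hf'N
            · exact hFN g hg'
          · rw [Finset.card_insert_of_notMem he'E, Finset.card_insert_of_notMem hf'F, hEF]
          · intro f hf p hp
            rcases Finset.mem_insert.mp hf with rfl | hf'
            · rw [hf'eq, Sym2.mem_iff] at hp
              rcases hp with rfl | rfl
              · exact Or.inl ⟨e', Finset.mem_insert_self _ _, hye'⟩
              · exact Or.inr rfl
            · rcases hi5 f hf' p hp with ⟨e, heE, hpe⟩ | rfl
              · exact Or.inl ⟨e, Finset.mem_insert_of_mem heE, hpe⟩
              · exact Or.inl ⟨e', Finset.mem_insert_self _ _, hxe'⟩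
          · intro f hf
            rcases Finset.mem_insert.mp hf with rfl | hf'
            · rw [hf'eq, Sym2.mem_iff]
              push_neg
              exact ⟨fun h => hyw h.symm, fun h => hy'w h.symm⟩
            · exact hi6 f hf'
          · exact Or.inl ⟨f', Finset.mem_insert_self _ _⟩
      · -- x is N-exposed : improve N, contradiction with maximality of |N ∩ M|
        have hF : F.Nonempty := hstart.resolve_right hNx
        set Nstar := (N \ E) ∪ F with hNstardef
        have hNstarMat : IsMat A Nstar := by
          constructor
          · intro g hg
            rcases Finset.mem_union.mp hg with hg' | hg'
            · exact hNmat.1 (Finset.mem_sdiff.mp hg').1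
            · exact hM.1 (hFM hg')
          · intro a ha b hb hne p hpa hpb
            rcases Finset.mem_union.mp ha with ha' | ha' <;>
              rcases Finset.mem_union.mp hb with hb' | hb'
            · exact hNmat.2 a (Finset.mem_sdiff.mp ha').1 b (Finset.mem_sdiff.mp hb').1 hne p hpa hpb
            · rcases hi5 b hb' p hpb with ⟨e, heE, hpe⟩ | rfl
              · have : a = e := hNmat.eq_of_mem (Finset.mem_sdiff.mp ha').1 (hEN heE) hpa hpe
                exact (Finset.mem_sdiff.mp ha').2 (this ▸ heE)
              · exact hNx ⟨a, (Finset.mem_sdiff.mp ha').1, hpa⟩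
            · rcases hi5 a ha' p hpa with ⟨e, heE, hpe⟩ | rfl
              · have : b = e := hNmat.eq_of_mem (Finset.mem_sdiff.mp hb').1 (hEN heE) hpb hpe
                exact (Finset.mem_sdiff.mp hb').2 (this ▸ heE)
              · exact hNx ⟨b, (Finset.mem_sdiff.mp hb').1, hpb⟩
            · exact hM.2 a (hFM ha') b (hFM hb') hne p hpa hpb
        have hdisjFN : Disjoint (N \ E) F := by
          rw [Finset.disjoint_right]
          intro g hgF hgN
          exact (hFN g hgF) (Finset.mem_sdiff.mp hgN).1
        have hNstarcard : Nstar.card = snum := by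
          rw [hNstardef, Finset.card_union_of_disjoint hdisjFN, Finset.card_sdiff_of_subset hEN, hNcard, ← hEF]
          have : E.card ≤ N.card := Finset.card_le_card hEN
          rw [hNcard] at this
          omega
        have hNstarw : ¬cov Nstar w := by
          rintro ⟨g, hg, hwg⟩
          rcases Finset.mem_union.mp hg with hg' | hg'
          · exact hNw ⟨g, (Finset.mem_sdiff.mp hg').1, hwg⟩
          · exact (hi6 g hg') hwg
        have hle := hNbest Nstar ⟨hNstarMat, hNstarcard, hNstarw⟩
        have hint : Nstar ∩ M = (N ∩ M) ∪ F := by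
          ext g
          simp only [hNstardef, Finset.mem_inter, Finset.mem_union, Finset.mem_sdiff]
          constructor
          · rintro ⟨hg1 | hg1, hgM⟩
            · exact Or.inl ⟨hg1.1, hgM⟩
            · exact Or.inr hg1
          · rintro (⟨hgN, hgM⟩ | hgF)
            · exact ⟨Or.inl ⟨hgN, fun hgE => (hEM g hgE) hgM⟩, hgM⟩
            · exact ⟨Or.inr hgF, hFM hgF⟩
        have hdisj2 : Disjoint (N ∩ M) F := by
          rw [Finset.disjoint_right]
          intro g hgF hgNM
          exact (hFN g hgF) (Finset.mem_inter.mp hgNM).1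
        rw [hint, Finset.card_union_of_disjoint hdisj2] at hle
        have : F.card = 0 := by omega
        rw [Finset.card_eq_zero] at this
        exact Finset.nonempty_iff_ne_empty.mp hF this
    -- fire the recursion from u
    exact REC (N \ M).card M ∅ ∅ u rfl (by simp) hM hcard hu hv huv
      (Finset.empty_subset _) (by simp) (Finset.empty_subset _) (by simp) rfl
      (by simp) (by simp) (Or.inr hcovNu)



section ColorPart

variable (A : Finset (Sym2 V)) (snum : ℕ)
  (hnd : ∀ e ∈ A, ¬e.IsDiag)
  (hmax : ∀ M, IsMat A M → M.card ≤ snum)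
  (hav : ∀ x : V, ∃ N, IsMat A N ∧ N.card = snum ∧ ¬cov N x)


/-- the graph spanned by the edges of `A` -/
abbrev GA : SimpleGraph V := SimpleGraph.fromEdgeSet (A : Set (Sym2 V))

noncomputable def edgeVerts (e : Sym2 V) : Finset V := Finset.univ.filter (· ∈ e)

lemma edgeVerts_card {e : Sym2 V} (he : ¬e.IsDiag) : (edgeVerts e).card = 2 := by
  induction e with
  | _ a b =>
    rw [Sym2.mk_isDiag_iff] at he
    have : edgeVerts s(a, b) = {a, b} := by
      ext z
      simp [edgeVerts, Sym2.mem_iff]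
    rw [this, Finset.card_insert_of_notMem (by simpa using he), Finset.card_singleton]

include hnd hmax hav

lemma adj_of_mem_edge {e : Sym2 V} (he : e ∈ A) {p q : V} (hp : p ∈ e) (hq : q ∈ e)
    (hpq : p ≠ q) : (GA A).Adj p q := by
  obtain ⟨y, hy, heq⟩ := mem_exists_other hp (hnd e he)
  have : q = y := by
    subst heq
    rw [Sym2.mem_iff] at hq
    rcases hq with rfl | rfl
    · exact absurd rfl hpq
    · rfl
  subst this
  rw [SimpleGraph.fromEdgeSet_adj]
  exact ⟨by rw [← heq]; exact_mod_cast he, hpq⟩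

/-- vertex set of the component of x -/
noncomputable def compF (x : V) : Finset V :=
  Finset.univ.filter (fun y => ((GA A).Reachable x y : Prop))

lemma double_count (P : Finset (Sym2 V)) (hP : IsMat A P) (x : V) :
    ((compF A x).filter (fun y => cov P y)).card =
      2 * (P.filter (fun e => ∀ p ∈ e, (GA A).Reachable x p)).card := by
  classical
  have hset : (compF A x).filter (fun y => cov P y) =
      (P.filter (fun e => ∀ p ∈ e, (GA A).Reachable x p)).biUnion edgeVerts := by
    ext y
    simp only [compF, Finset.mem_filter, Finset.mem_univ, true_and, Finset.mem_biUnion,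
      edgeVerts]
    constructor
    · rintro ⟨hreach, e, heP, hye⟩
      refine ⟨e, ⟨heP, ?_⟩, by simp [hye]⟩
      intro p hpe
      by_cases hpy : p = y
      · exact hpy ▸ hreach
      · exact hreach.trans (adj_of_mem_edge A snum hnd hmax hav (hP.1 heP) hye hpe
          (fun h => hpy h.symm)).reachable
    · rintro ⟨e, ⟨heP, hall⟩, hy⟩
      exact ⟨hall y hy, e, heP, hy⟩
  rw [hset, Finset.card_biUnion]
  · rw [Finset.sum_congr rfl (fun e he => edgeVerts_card (hnd e (hP.1 (Finset.mem_filter.mp he).1)))]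
    rw [Finset.sum_const, smul_eq_mul, mul_comm]
  · intro e he f hf hef
    rw [Function.onFun, Finset.disjoint_left]
    intro z hze hzf
    simp only [edgeVerts, Finset.mem_filter, Finset.mem_univ, true_and] at hze hzf
    exact hP.2 e (Finset.mem_filter.mp he).1 f (Finset.mem_filter.mp hf).1 hef z hze hzf

lemma comp_odd_card (x : V) :
    ∃ c : ℕ, (compF A x).card = 2 * c + 1 := by
  obtain ⟨N, hN, hNc, hNx⟩ := hav x
  have hfe : (compF A x).filter (fun y => cov N y) = (compF A x).erase x := by
    ext y
    simp only [Finset.mem_filter, Finset.mem_erase, compF, Finset.mem_univ, true_and]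
    constructor
    · rintro ⟨hreach, hcovy⟩
      exact ⟨fun h => hNx (h ▸ hcovy), hreach⟩
    · rintro ⟨hyx, hreach⟩
      refine ⟨hreach, ?_⟩
      by_contra hcy
      exact claimA A snum hnd hmax hav N x y hN hNc hNx hcy (fun h => hyx h.symm) hreach
  have hdc := double_count A snum hnd hmax hav N hN x
  rw [hfe] at hdc
  have hxmem : x ∈ compF A x := by
    simp [compF, SimpleGraph.Reachable.refl]
  rw [Finset.card_erase_of_mem hxmem] at hdc
  have hpos : 1 ≤ (compF A x).card := Finset.card_pos.mpr ⟨x, hxmem⟩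
  exact ⟨(N.filter (fun e => ∀ p ∈ e, (GA A).Reachable x p)).card, by omega⟩

lemma exposed_in_comp (M : Finset (Sym2 V)) (hM : IsMat A M) (p : V) :
    ∃ z, (GA A).Reachable p z ∧ ¬cov M z := by
  by_contra hall
  push_neg at hall
  have hfe : (compF A p).filter (fun y => cov M y) = compF A p := by
    apply Finset.filter_true_of_mem
    intro y hy
    simp only [compF, Finset.mem_filter, Finset.mem_univ, true_and] at hy
    exact hall y hy
  have hdc := double_count A snum hnd hmax hav M hM p
  obtain ⟨c, hc⟩ := comp_odd_card A snum hnd hmax hav p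
  rw [hfe, hc] at hdc
  omega

/-- main per-colour counting: purity implies at least `3 * snum` edges -/
lemma countA (hpure : ∀ p r : V, p ≠ r → (GA A).Reachable p r → s(p, r) ∈ A)
    (M : Finset (Sym2 V)) (hM : IsMat A M) (hMc : M.card = snum) :
    3 * snum ≤ A.card := by
  classical
  set zc : (GA A).ConnectedComponent → V := fun K =>
    if h : ∃ z, (GA A).connectedComponentMk z = K ∧ ¬cov M z then h.choose else K.out with hzc
  set zfun : V → V := fun p => zc ((GA A).connectedComponentMk p) with hzfun
  have hzspec : ∀ p : V, (GA A).Reachable p (zfun p) ∧ ¬cov M (zfun p) := by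
    intro p
    obtain ⟨z, hz1, hz2⟩ := exposed_in_comp A snum hnd hmax hav M hM p
    have hex : ∃ z', (GA A).connectedComponentMk z' = (GA A).connectedComponentMk p ∧ ¬cov M z' :=
      ⟨z, ConnectedComponent.sound hz1.symm, hz2⟩
    have : zfun p = hex.choose := by
      rw [hzfun, hzc]
      simp only [dif_pos hex]
    rw [this]
    obtain ⟨h1, h2⟩ := hex.choose_spec
    exact ⟨(ConnectedComponent.eq.mp h1).symm, h2⟩
  have hzconst : ∀ {p q : V}, (GA A).Reachable p q → zfun p = zfun q := by
    intro p q h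
    rw [hzfun]
    simp only
    rw [ConnectedComponent.sound h]
  set S : Finset (Sym2 V) :=
    M.biUnion (fun e => (edgeVerts e).image (fun p => s(p, zfun p))) with hS
  have hcovmem : ∀ {p : V} {e : Sym2 V}, e ∈ M → p ∈ e → p ≠ zfun p := by
    intro p e he hpe h
    exact (hzspec p).2 (h ▸ ⟨e, he, hpe⟩)
  have hScard : S.card = 2 * M.card := by
    rw [hS, Finset.card_biUnion]
    · rw [Finset.sum_congr rfl (fun e he => ?_), Finset.sum_const, smul_eq_mul, mul_comm]
      rw [Finset.card_image_of_injOn, edgeVerts_card (hnd e (hM.1 he))]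
      intro p hp q hq hpq
      simp only [edgeVerts, Finset.mem_coe, Finset.mem_filter, Finset.mem_univ, true_and] at hp hq
      have hpz : p ≠ zfun p := hcovmem he hp
      have hqz : q ≠ zfun q := hcovmem he hq
      rw [Sym2.eq_iff] at hpq
      rcases hpq with ⟨rfl, _⟩ | ⟨h1, h2⟩
      · rfl
      · exact absurd (⟨e, he, h1 ▸ hp⟩ : cov M (zfun q)) (hzspec q).2
    · intro e he f hf hef
      rw [Function.onFun, Finset.disjoint_left]
      intro g hg1 hg2
      simp only [Finset.mem_image] at hg1 hg2
      obtain ⟨p, hp, hgp⟩ := hg1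
      obtain ⟨q, hq, hgq⟩ := hg2
      simp only [edgeVerts, Finset.mem_filter, Finset.mem_univ, true_and] at hp hq
      have := hgp.trans hgq.symm
      rw [Sym2.eq_iff] at this
      rcases this with ⟨rfl, _⟩ | ⟨h1, h2⟩
      · exact hM.2 e he f hf hef p hp hq
      · exact (hzspec q).2 (h1 ▸ ⟨e, he, hp⟩)
  have hSM : Disjoint S M := by
    rw [Finset.disjoint_left]
    intro g hgS hgM
    rw [hS, Finset.mem_biUnion] at hgS
    obtain ⟨e, he, hg⟩ := hgS
    rw [Finset.mem_image] at hg
    obtain ⟨p, hp, hgp⟩ := hg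
    have : zfun p ∈ g := hgp ▸ Sym2.mem_mk_right _ _
    exact (hzspec p).2 ⟨g, hgM, this⟩
  have hSsub : S ⊆ A := by
    intro g hgS
    rw [hS, Finset.mem_biUnion] at hgS
    obtain ⟨e, he, hg⟩ := hgS
    rw [Finset.mem_image] at hg
    obtain ⟨p, hp, hgp⟩ := hg
    simp only [edgeVerts, Finset.mem_filter, Finset.mem_univ, true_and] at hp
    rw [← hgp]
    exact hpure p (zfun p) (hcovmem he hp) (hzspec p).1
  have hsub : S ∪ M ⊆ A := Finset.union_subset hSsub hM.1
  have := Finset.card_le_card hsub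
  rw [Finset.card_union_of_disjoint hSM, hScard, hMc] at this
  omega

end ColorPart



section Assembly

variable {n : ℕ}

/-- colour class of `c` on `G` -/
noncomputable def Ecl (t : ℕ) (G : SimpleGraph V) [DecidableRel G.Adj] (c : Sym2 V → Fin t)
    (j : Fin t) : Finset (Sym2 V) :=
  G.edgeFinset.filter (fun e => c e = j)

variable {t : ℕ} {m : Fin t → ℕ} {G : SimpleGraph V} [DecidableRel G.Adj] {c : Sym2 V → Fin t}

lemma Ecl_nd (j : Fin t) : ∀ e ∈ Ecl t G c j, ¬e.IsDiag := by
  intro e he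
  exact SimpleGraph.not_isDiag_of_mem_edgeSet G
    (SimpleGraph.mem_edgeFinset.mp (Finset.mem_filter.mp he).1)

lemma Ecl_mem {e : Sym2 V} {j : Fin t} :
    e ∈ Ecl t G c j ↔ e ∈ G.edgeSet ∧ c e = j := by
  rw [Ecl, Finset.mem_filter, SimpleGraph.mem_edgeFinset]

/-- F1 : badness bounds matchings in each colour class -/
lemma F1 (hbad : IsBadMatchingColoring t m G c) (j : Fin t) :
    ∀ M, IsMat (Ecl t G c j) M → M.card ≤ m j - 1 := by
  intro M hM
  by_contra hlt
  push_neg at hlt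
  have hmj : m j ≤ M.card := by omega
  obtain ⟨sub, hsub, hsubcard⟩ := Finset.exists_subset_card_eq hmj
  refine hbad j ⟨sub, ?_, hsubcard, ?_⟩
  · intro e he
    exact Ecl_mem.mp (hM.1 (hsub he))
  · intro e he f hf hef
    exact hM.2 e (hsub he) f (hsub hf) hef

/-- F2 : saturation provides maximum matchings avoiding any non-adjacent pair -/
lemma F2 (hm : ∀ i, 1 ≤ m i) (hbad : IsBadMatchingColoring t m G c)
    (hsat : ∀ u v : V, u ≠ v → ¬ G.Adj u v →
      ∀ c' : Sym2 V → Fin t, ¬ IsBadMatchingColoring t m (G ⊔ fromEdgeSet {s(u, v)}) c')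
    {u v : V} (hne : u ≠ v) (hnadj : ¬G.Adj u v) (j : Fin t) :
    ∃ M, IsMat (Ecl t G c j) M ∧ M.card = m j - 1 ∧ ¬cov M u ∧ ¬cov M v := by
  classical
  set c' : Sym2 V → Fin t := Function.update c s(u, v) j with hc'
  have hnb := hsat u v hne hnadj c'
  simp only [IsBadMatchingColoring, not_forall, not_not] at hnb
  obtain ⟨i, s, hs1, hs2, hs3⟩ := hnb
  have hsuvG : s(u, v) ∉ G.edgeSet := fun h => hnadj (G.mem_edgeSet.mp h)
  have hedge : ∀ e ∈ s, (e ∈ G.edgeSet ∨ e = s(u, v)) ∧ c' e = i := by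
    intro e he
    obtain ⟨hmem, hcol⟩ := hs1 e he
    rw [SimpleGraph.edgeSet_sup] at hmem
    rcases hmem with h | h
    · exact ⟨Or.inl h, hcol⟩
    · rw [SimpleGraph.edgeSet_fromEdgeSet] at h
      exact ⟨Or.inr h.1, hcol⟩
  have hGe : ∀ e ∈ s, e ≠ s(u, v) → e ∈ G.edgeSet ∧ c e = i := by
    intro e he hne'
    obtain ⟨hmem, hcol⟩ := hedge e he
    refine ⟨hmem.resolve_right hne', ?_⟩
    rw [hc', Function.update_of_ne hne'] at hcol
    exact hcol
  by_cases hij : i = j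
  · subst hij
    by_cases hsuv : s(u, v) ∈ s
    · refine ⟨s.erase s(u, v), ⟨?_, ?_⟩, ?_, ?_, ?_⟩
      · intro e he
        have hne' := Finset.ne_of_mem_erase he
        have := hGe e (Finset.mem_of_mem_erase he) hne'
        exact Ecl_mem.mpr this
      · intro e he f hf hef
        exact hs3 e (Finset.mem_of_mem_erase he) f (Finset.mem_of_mem_erase hf) hef
      · rw [Finset.card_erase_of_mem hsuv, hs2]
      · rintro ⟨e, he, hue⟩
        exact hs3 s(u, v) hsuv e (Finset.mem_of_mem_erase he)
          (Finset.ne_of_mem_erase he).symm u (Sym2.mem_mk_left u v) hue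
      · rintro ⟨e, he, hve⟩
        exact hs3 s(u, v) hsuv e (Finset.mem_of_mem_erase he)
          (Finset.ne_of_mem_erase he).symm v (Sym2.mem_mk_right u v) hve
    · exfalso
      have hMat : IsMat (Ecl t G c i) s := by
        refine ⟨fun e he => Ecl_mem.mpr (hGe e he (fun h => hsuv (h ▸ he))), ?_⟩
        intro e he f hf hef
        exact hs3 e he f hf hef
      have := F1 hbad i s hMat
      have := hm i
      omega
  · exfalso
    have hsuvc : c' s(u, v) = j := by rw [hc']; exact Function.update_self _ _ _
    have hMat : IsMat (Ecl t G c i) s := by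
      refine ⟨fun e he => ?_, fun e he f hf hef => hs3 e he f hf hef⟩
      have hne' : e ≠ s(u, v) := by
        intro h
        have h2 := (hedge e he).2
        rw [h, hsuvc] at h2
        exact hij h2.symm
      exact Ecl_mem.mpr (hGe e he hne')
    have h1 := F1 hbad i s hMat
    have h2 := hm i
    rw [hs2] at h1
    omega

theorem lowerBound {t : ℕ} (ht : 1 ≤ t) {m : Fin t → ℕ} (hm : ∀ i, 1 ≤ m i)
    (G : SimpleGraph V) [DecidableRel G.Adj] [Nonempty V]
    (hsat : IsRminMatchingSat t m G)
    (hn : 3 * ((∑ i, m i) - t) < Fintype.card V) :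
    3 * ((∑ i, m i) - t) ≤ G.edgeFinset.card := by
  classical
  obtain ⟨c, hbad⟩ := hsat.1
  have hsat2 := hsat.2
  set k := (∑ i, m i) - t with hk
  have hksum : ∑ j : Fin t, (m j - 1) = k := by
    have h1 : ∑ j : Fin t, m j = ∑ j : Fin t, ((m j - 1) + 1) := by
      refine Finset.sum_congr rfl (fun j _ => ?_)
      have := hm j
      omega
    rw [Finset.sum_add_distrib, Finset.sum_const, Finset.card_univ, Fintype.card_fin,
      smul_eq_mul, mul_one] at h1
    have h2 : t ≤ ∑ j : Fin t, m j := by omega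
    omega
  by_cases hdom : ∃ x : V, ∀ y, y ≠ x → G.Adj x y
  · obtain ⟨x, hx⟩ := hdom
    have hsub : (Finset.univ.erase x).image (fun y => s(x, y)) ⊆ G.edgeFinset := by
      intro e he
      rw [Finset.mem_image] at he
      obtain ⟨y, hy, rfl⟩ := he
      rw [SimpleGraph.mem_edgeFinset, SimpleGraph.mem_edgeSet]
      exact hx y (Finset.mem_erase.mp hy).1
    have hcard : ((Finset.univ.erase x).image (fun y => s(x, y))).card =
        Fintype.card V - 1 := by
      rw [Finset.card_image_of_injOn ?_, Finset.card_erase_of_mem (Finset.mem_univ x),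
        Finset.card_univ]
      intro a ha b hb hab
      rw [Sym2.eq_iff] at hab
      rcases hab with ⟨_, h⟩ | ⟨h1, h2⟩
      · exact h
      · exact absurd h2 (Finset.mem_erase.mp ha).1
    have hle := Finset.card_le_card hsub
    rw [hcard] at hle
    omega
  push_neg at hdom
  have hnd : ∀ j : Fin t, ∀ e ∈ Ecl t G c j, ¬e.IsDiag := fun j => Ecl_nd j
  have hmax : ∀ j : Fin t, ∀ M, IsMat (Ecl t G c j) M → M.card ≤ m j - 1 :=
    fun j => F1 hbad j
  have hav : ∀ j : Fin t, ∀ x : V,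
      ∃ N, IsMat (Ecl t G c j) N ∧ N.card = m j - 1 ∧ ¬cov N x := by
    intro j x
    obtain ⟨y, hyx, hnadj⟩ := hdom x
    obtain ⟨M, h1, h2, h3, _⟩ := F2 hm hbad hsat2 (fun h => hyx h.symm) hnadj j
    exact ⟨M, h1, h2, h3⟩
  have hCA : ∀ j : Fin t, ∀ M (u v : V), IsMat (Ecl t G c j) M → M.card = m j - 1 →
      ¬cov M u → ¬cov M v → u ≠ v → ¬(GA (Ecl t G c j)).Reachable u v :=
    fun j => claimA _ _ (hnd j) (hmax j) (hav j)
  have hG3 : ∀ j : Fin t, ∀ x y : V, x ≠ y → (GA (Ecl t G c j)).Reachable x y → G.Adj x y := by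
    intro j x y hxy hreach
    by_contra hnadj
    obtain ⟨M, h1, h2, h3, h4⟩ := F2 hm hbad hsat2 hxy hnadj j
    exact hCA j M x y h1 h2 h3 h4 hxy hreach
  have hG4 : ∀ j q : Fin t, j ≠ q → ∀ x y : V, x ≠ y →
      (GA (Ecl t G c j)).Reachable x y → (GA (Ecl t G c q)).Reachable x y → False := by
    intro j q hjq x y hxy hrj hrq
    obtain ⟨w, hwx, hnadjxw⟩ := hdom x
    set cs : Sym2 V → Fin t := fun e => if x ∈ e then j else if y ∈ e then q else c e with hcs
    have hnb := hsat2 x w (fun h => hwx h.symm) hnadjxw cs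
    simp only [IsBadMatchingColoring, not_forall, not_not] at hnb
    obtain ⟨i, s, hs1, hs2, hs3⟩ := hnb
    have hedge : ∀ e ∈ s, (e ∈ G.edgeSet ∨ e = s(x, w)) ∧ cs e = i := by
      intro e he
      obtain ⟨hmem, hcol⟩ := hs1 e he
      rw [SimpleGraph.edgeSet_sup] at hmem
      rcases hmem with h | h
      · exact ⟨Or.inl h, hcol⟩
      · rw [SimpleGraph.edgeSet_fromEdgeSet] at h
        exact ⟨Or.inr h.1, hcol⟩
    have hfin : ∀ r : Fin t, (GA (Ecl t G c r)).Reachable x y →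
        ∀ M', IsMat (Ecl t G c r) M' → m r - 1 ≤ M'.card → ¬cov M' x → ¬cov M' y → False := by
      intro r hr M' hM' hcard hcx hcy
      have hle := hmax r M' hM'
      have hcc : M'.card = m r - 1 := by omega
      exact hCA r M' x y hM' hcc hcx hcy hxy hr
    by_cases hij : i = j
    · subst hij
      set M' := s.filter (fun e => ¬ x ∈ e) with hM'def
      have hone : (s.filter (fun e => x ∈ e)).card ≤ 1 := by
        rw [Finset.card_le_one]
        intro a ha b hb
        rw [Finset.mem_filter] at ha hb
        by_contra hab
        exact hs3 a ha.1 b hb.1 hab x ha.2 hb.2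
      have hsplit := Finset.card_filter_add_card_filter_not
        (s := s) (p := fun e => x ∈ e)
      have hMcard : m i - 1 ≤ M'.card := by
        rw [hM'def]
        omega
      have key : ∀ e ∈ M', e ∈ Ecl t G c i ∧ ¬ x ∈ e ∧ ¬ y ∈ e := by
        intro e he
        rw [hM'def, Finset.mem_filter] at he
        obtain ⟨hes, hxe⟩ := he
        obtain ⟨hmem, hcol⟩ := hedge e hes
        simp only [hcs] at hcol
        simp only [hxe, if_false] at hcol
        have hye : ¬ y ∈ e := by
          intro hye
          rw [if_pos hye] at hcol
          exact hjq hcol.symm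
        rw [if_neg hye] at hcol
        have heG : e ∈ G.edgeSet := by
          rcases hmem with h | h
          · exact h
          · exact absurd (h ▸ Sym2.mem_mk_left x w) hxe
        exact ⟨Ecl_mem.mpr ⟨heG, hcol⟩, hxe, hye⟩
      have hmat : IsMat (Ecl t G c i) M' := by
        refine ⟨fun e he => (key e he).1, fun e he f hf hef => ?_⟩
        rw [hM'def, Finset.mem_filter] at he hf
        exact hs3 e he.1 f hf.1 hef
      refine hfin i hrj M' hmat hMcard ?_ ?_
      · rintro ⟨e, he, hxe⟩
        exact (key e he).2.1 hxe
      · rintro ⟨e, he, hye⟩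
        exact (key e he).2.2 hye
    by_cases hiq : i = q
    · subst hiq
      set M' := s.filter (fun e => ¬ y ∈ e) with hM'def
      have hone : (s.filter (fun e => y ∈ e)).card ≤ 1 := by
        rw [Finset.card_le_one]
        intro a ha b hb
        rw [Finset.mem_filter] at ha hb
        by_contra hab
        exact hs3 a ha.1 b hb.1 hab y ha.2 hb.2
      have hsplit := Finset.card_filter_add_card_filter_not
        (s := s) (p := fun e => y ∈ e)
      have hMcard : m i - 1 ≤ M'.card := by
        rw [hM'def]
        omega
      have key : ∀ e ∈ M', e ∈ Ecl t G c i ∧ ¬ x ∈ e ∧ ¬ y ∈ e := by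
        intro e he
        rw [hM'def, Finset.mem_filter] at he
        obtain ⟨hes, hye⟩ := he
        obtain ⟨hmem, hcol⟩ := hedge e hes
        simp only [hcs] at hcol
        have hxe : ¬ x ∈ e := by
          intro hxe
          rw [if_pos hxe] at hcol
          exact hjq hcol
        rw [if_neg hxe, if_neg hye] at hcol
        have heG : e ∈ G.edgeSet := by
          rcases hmem with h | h
          · exact h
          · exact absurd (h ▸ Sym2.mem_mk_left x w) hxe
        exact ⟨Ecl_mem.mpr ⟨heG, hcol⟩, hxe, hye⟩
      have hmat : IsMat (Ecl t G c i) M' := by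
        refine ⟨fun e he => (key e he).1, fun e he f hf hef => ?_⟩
        rw [hM'def, Finset.mem_filter] at he hf
        exact hs3 e he.1 f hf.1 hef
      refine hfin i hrq M' hmat hMcard ?_ ?_
      · rintro ⟨e, he, hxe⟩
        exact (key e he).2.1 hxe
      · rintro ⟨e, he, hye⟩
        exact (key e he).2.2 hye
    · -- i is neither j nor q
      have key : ∀ e ∈ s, e ∈ Ecl t G c i := by
        intro e he
        obtain ⟨hmem, hcol⟩ := hedge e he
        simp only [hcs] at hcol
        have hxe : ¬ x ∈ e := by
          intro hxe
          rw [if_pos hxe] at hcol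
          exact hij hcol.symm
        have hye : ¬ y ∈ e := by
          intro hye
          rw [if_neg hxe, if_pos hye] at hcol
          exact hiq hcol.symm
        rw [if_neg hxe, if_neg hye] at hcol
        have heG : e ∈ G.edgeSet := by
          rcases hmem with h | h
          · exact h
          · exact absurd (h ▸ Sym2.mem_mk_left x w) hxe
        exact Ecl_mem.mpr ⟨heG, hcol⟩
      have hmat : IsMat (Ecl t G c i) s :=
        ⟨key, fun e he f hf hef => hs3 e he f hf hef⟩
      have hle := hmax i s hmat
      have := hm i
      omega
  have hG5 : ∀ j : Fin t, ∀ x y : V, x ≠ y →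
      (GA (Ecl t G c j)).Reachable x y → s(x, y) ∈ Ecl t G c j := by
    intro j x y hxy hreach
    have hadj := hG3 j x y hxy hreach
    set q := c s(x, y) with hq
    have hmemq : s(x, y) ∈ Ecl t G c q := Ecl_mem.mpr ⟨G.mem_edgeSet.mpr hadj, rfl⟩
    by_cases hqj : q = j
    · exact hqj ▸ hmemq
    · exfalso
      have hadjq : (GA (Ecl t G c q)).Adj x y := by
        rw [SimpleGraph.fromEdgeSet_adj]
        exact ⟨by exact_mod_cast hmemq, hxy⟩
      exact hG4 j q (fun h => hqj h.symm) x y hxy hreach hadjq.reachable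
  have hcount : ∀ j : Fin t, 3 * (m j - 1) ≤ (Ecl t G c j).card := by
    intro j
    obtain ⟨M, h1, h2, _⟩ := hav j (Classical.arbitrary V)
    exact countA _ _ (hnd j) (hmax j) (hav j)
      (fun p r hpr hre => hG5 j p r hpr hre) M h1 h2
  have hsum : G.edgeFinset.card = ∑ j : Fin t, (Ecl t G c j).card :=
    Finset.card_eq_sum_card_fiberwise (fun e _ => Finset.mem_univ (c e))
  calc 3 * k = ∑ j : Fin t, 3 * (m j - 1) := by rw [← hksum, Finset.mul_sum]
    _ ≤ ∑ j : Fin t, (Ecl t G c j).card := Finset.sum_le_sum (fun j _ => hcount j)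
    _ = G.edgeFinset.card := hsum.symm

end Assembly



section Upper

variable (t : ℕ) (m : Fin t → ℕ) (ht : 1 ≤ t) (hm : ∀ i, 1 ≤ m i)

/-- partial sums of `m · - 1` -/
def Spsum (j : ℕ) : ℕ := ∑ r ∈ Finset.univ.filter (fun r : Fin t => (r : ℕ) < j), (m r - 1)

lemma Spsum_zero : Spsum t m 0 = 0 := by
  rw [Spsum]
  convert Finset.sum_empty
  ext r
  simp

lemma Spsum_top : Spsum t m t = ∑ r : Fin t, (m r - 1) := by
  rw [Spsum]
  congr 1
  ext r
  simp [r.2]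

lemma Spsum_mono {j j' : ℕ} (h : j ≤ j') : Spsum t m j ≤ Spsum t m j' := by
  apply Finset.sum_le_sum_of_subset
  intro r hr
  simp only [Finset.mem_filter, Finset.mem_univ, true_and] at hr ⊢
  omega

lemma Spsum_step {j : ℕ} (hj : j < t) :
    Spsum t m (j + 1) = Spsum t m j + (m ⟨j, hj⟩ - 1) := by
  rw [Spsum, Spsum]
  have : Finset.univ.filter (fun r : Fin t => (r : ℕ) < j + 1) =
      insert (⟨j, hj⟩ : Fin t) (Finset.univ.filter (fun r : Fin t => (r : ℕ) < j)) := by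
    ext r
    simp only [Finset.mem_filter, Finset.mem_univ, true_and, Finset.mem_insert, Fin.ext_iff]
    omega
  rw [this, Finset.sum_insert (by simp)]
  ring

/-- which colour a block index gets -/
noncomputable def gcol (i : ℕ) : Fin t :=
  if h : ∃ j, j < t ∧ i < Spsum t m (j + 1) then ⟨Nat.find h, (Nat.find_spec h).1⟩
  else ⟨0, ht⟩

lemma gcol_iff {i : ℕ} (hi : i < ∑ r : Fin t, (m r - 1)) (j : Fin t) :
    gcol t m ht i = j ↔ Spsum t m (j : ℕ) ≤ i ∧ i < Spsum t m ((j : ℕ) + 1) := by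
  have hex : ∃ j', j' < t ∧ i < Spsum t m (j' + 1) := by
    refine ⟨t - 1, by omega, ?_⟩
    have : t - 1 + 1 = t := by omega
    rw [this, Spsum_top]
    exact hi
  rw [gcol, dif_pos hex]
  constructor
  · intro h
    have hval : Nat.find hex = (j : ℕ) := by rw [← h]
    obtain ⟨h1, h2⟩ := Nat.find_spec hex
    rw [hval] at h2
    refine ⟨?_, h2⟩
    by_cases hj0 : (j : ℕ) = 0
    · rw [hj0, Spsum_zero]; omega
    · have hlt : (j : ℕ) - 1 < Nat.find hex := by omega
      have := Nat.find_min hex hlt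
      push_neg at this
      have h3 := this (by omega)
      have : (j : ℕ) - 1 + 1 = (j : ℕ) := by omega
      rw [this] at h3
      omega
  · rintro ⟨h1, h2⟩
    have : Nat.find hex = (j : ℕ) := by
      rw [Nat.find_eq_iff]
      refine ⟨⟨j.2, h2⟩, ?_⟩
      intro j' hj'
      push_neg
      intro _
      have : Spsum t m (j' + 1) ≤ Spsum t m (j : ℕ) := Spsum_mono t m (by omega)
      omega
    exact Fin.ext this

lemma gcol_fiber_card (j : Fin t) :
    ((Finset.range (∑ r : Fin t, (m r - 1))).filter (fun i => gcol t m ht i = j)).card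
      = m j - 1 := by
  have hIco : (Finset.range (∑ r : Fin t, (m r - 1))).filter (fun i => gcol t m ht i = j)
      = Finset.Ico (Spsum t m (j : ℕ)) (Spsum t m ((j : ℕ) + 1)) := by
    ext i
    simp only [Finset.mem_filter, Finset.mem_range, Finset.mem_Ico]
    constructor
    · rintro ⟨hi, hcol⟩
      exact (gcol_iff t m ht hi j).mp hcol
    · rintro ⟨h1, h2⟩
      have hi : i < ∑ r : Fin t, (m r - 1) := by
        have h3 : Spsum t m ((j : ℕ) + 1) ≤ Spsum t m t := Spsum_mono t m j.2
        rw [Spsum_top] at h3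
        omega
      exact ⟨hi, (gcol_iff t m ht hi j).mpr ⟨h1, h2⟩⟩
  rw [hIco, Nat.card_Ico, Spsum_step t m j.2]
  have : (⟨(j : ℕ), j.2⟩ : Fin t) = j := by exact Fin.ext rfl
  rw [this]
  omega

end Upper

section UpperGraph

variable (t : ℕ) (m : Fin t → ℕ)

/-- vertex with value `a` (mod `n`) -/
def vtx (n : ℕ) (hn0 : 0 < n) (a : ℕ) : Fin n := ⟨a % n, Nat.mod_lt a hn0⟩

lemma vtx_coe (n : ℕ) (hn0 : 0 < n) {a : ℕ} (ha : a < n) :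
    ((vtx n hn0 a : Fin n) : ℕ) = a := Nat.mod_eq_of_lt ha

/-- the triangle on block `i` -/
def triple (n : ℕ) (hn0 : 0 < n) (i : ℕ) : Finset (Sym2 (Fin n)) :=
  {s(vtx n hn0 (3 * i), vtx n hn0 (3 * i + 1)),
   s(vtx n hn0 (3 * i), vtx n hn0 (3 * i + 2)),
   s(vtx n hn0 (3 * i + 1), vtx n hn0 (3 * i + 2))}

/-- the union of `k` disjoint triangles -/
def Eset (t : ℕ) (m : Fin t → ℕ) (n : ℕ) (hn0 : 0 < n) : Finset (Sym2 (Fin n)) :=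
  (Finset.range (∑ r : Fin t, (m r - 1))).biUnion (triple n hn0)

lemma exists_coords {n : ℕ} {hn0 : 0 < n} (hkn : 3 * (∑ r : Fin t, (m r - 1)) ≤ n)
    {i : ℕ} (hi : i < ∑ r : Fin t, (m r - 1)) {e : Sym2 (Fin n)} (he : e ∈ triple n hn0 i) :
    ∃ a b, 3 * i ≤ a ∧ a < b ∧ b ≤ 3 * i + 2 ∧ a < n ∧ b < n ∧
      e = s(vtx n hn0 a, vtx n hn0 b) := by
  rw [triple, Finset.mem_insert, Finset.mem_insert, Finset.mem_singleton] at he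
  rcases he with rfl | rfl | rfl
  · exact ⟨3 * i, 3 * i + 1, by omega, by omega, by omega, by omega, by omega, rfl⟩
  · exact ⟨3 * i, 3 * i + 2, by omega, by omega, by omega, by omega, by omega, rfl⟩
  · exact ⟨3 * i + 1, 3 * i + 2, by omega, by omega, by omega, by omega, by omega, rfl⟩

lemma coords_block {n : ℕ} {hn0 : 0 < n} (hkn : 3 * (∑ r : Fin t, (m r - 1)) ≤ n)
    {i : ℕ} (hi : i < ∑ r : Fin t, (m r - 1)) {e : Sym2 (Fin n)} (he : e ∈ triple n hn0 i)
    {p : Fin n} (hp : p ∈ e) : 3 * i ≤ (p : ℕ) ∧ (p : ℕ) ≤ 3 * i + 2 := by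
  obtain ⟨a, b, h1, h2, h3, h4, h5, rfl⟩ := exists_coords t m hkn hi he
  rw [Sym2.mem_iff] at hp
  rcases hp with rfl | rfl
  · rw [vtx_coe n hn0 h4]; omega
  · rw [vtx_coe n hn0 h5]; omega

lemma triple_nondiag {n : ℕ} {hn0 : 0 < n} (hkn : 3 * (∑ r : Fin t, (m r - 1)) ≤ n)
    {i : ℕ} (hi : i < ∑ r : Fin t, (m r - 1)) {e : Sym2 (Fin n)} (he : e ∈ triple n hn0 i) :
    ¬e.IsDiag := by
  obtain ⟨a, b, h1, h2, h3, h4, h5, rfl⟩ := exists_coords t m hkn hi he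
  rw [Sym2.mk_isDiag_iff]
  intro h
  have := vtx_coe n hn0 h4
  rw [h, vtx_coe n hn0 h5] at this
  omega

lemma Eset_nondiag {n : ℕ} {hn0 : 0 < n} (hkn : 3 * (∑ r : Fin t, (m r - 1)) ≤ n)
    {e : Sym2 (Fin n)} (he : e ∈ Eset t m n hn0) : ¬e.IsDiag := by
  rw [Eset, Finset.mem_biUnion] at he
  obtain ⟨i, hi, he⟩ := he
  exact triple_nondiag t m hkn (Finset.mem_range.mp hi) he

/-- the block of an edge -/
def blockOf {n : ℕ} : Sym2 (Fin n) → ℕ :=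
  Sym2.lift ⟨fun a b => min (a : ℕ) (b : ℕ) / 3, fun a b => by simp [min_comm]⟩

lemma blockOf_triple {n : ℕ} {hn0 : 0 < n} (hkn : 3 * (∑ r : Fin t, (m r - 1)) ≤ n)
    {i : ℕ} (hi : i < ∑ r : Fin t, (m r - 1)) {e : Sym2 (Fin n)} (he : e ∈ triple n hn0 i) :
    blockOf e = i := by
  obtain ⟨a, b, h1, h2, h3, h4, h5, rfl⟩ := exists_coords t m hkn hi he
  have hrfl : blockOf s(vtx n hn0 a, vtx n hn0 b)
      = min ((vtx n hn0 a : ℕ)) ((vtx n hn0 b : ℕ)) / 3 := rfl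
  rw [hrfl, vtx_coe n hn0 h4, vtx_coe n hn0 h5]
  omega

lemma triple_card {n : ℕ} {hn0 : 0 < n} (hkn : 3 * (∑ r : Fin t, (m r - 1)) ≤ n)
    {i : ℕ} (hi : i < ∑ r : Fin t, (m r - 1)) : (triple n hn0 i).card = 3 := by
  have hne : ∀ (a b a' b' : ℕ), a < n → b < n → a' < n → b' < n → ¬(a = a' ∧ b = b') →
      ¬(a = b' ∧ b = a') → s(vtx n hn0 a, vtx n hn0 b) ≠ s(vtx n hn0 a', vtx n hn0 b') := by
    intro a b a' b' ha hb ha' hb' h1 h2 heq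
    rw [Sym2.eq_iff] at heq
    rcases heq with ⟨e1, e2⟩ | ⟨e1, e2⟩
    · apply h1
      constructor
      · have := vtx_coe n hn0 ha; rw [e1, vtx_coe n hn0 ha'] at this; omega
      · have := vtx_coe n hn0 hb; rw [e2, vtx_coe n hn0 hb'] at this; omega
    · apply h2
      constructor
      · have := vtx_coe n hn0 ha; rw [e1, vtx_coe n hn0 hb'] at this; omega
      · have := vtx_coe n hn0 hb; rw [e2, vtx_coe n hn0 ha'] at this; omega
  rw [triple, Finset.card_insert_of_notMem, Finset.card_insert_of_notMem,
    Finset.card_singleton]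
  · rw [Finset.mem_singleton]
    exact hne _ _ _ _ (by omega) (by omega) (by omega) (by omega) (by omega) (by omega)
  · rw [Finset.mem_insert, Finset.mem_singleton]
    push_neg
    constructor
    · exact hne _ _ _ _ (by omega) (by omega) (by omega) (by omega) (by omega) (by omega)
    · exact hne _ _ _ _ (by omega) (by omega) (by omega) (by omega) (by omega) (by omega)

lemma Eset_card {n : ℕ} {hn0 : 0 < n} (hkn : 3 * (∑ r : Fin t, (m r - 1)) ≤ n) :
    (Eset t m n hn0).card = 3 * (∑ r : Fin t, (m r - 1)) := by
  rw [Eset, Finset.card_biUnion]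
  · rw [Finset.sum_congr rfl (fun i hi => triple_card t m hkn (Finset.mem_range.mp hi)),
      Finset.sum_const, Finset.card_range, smul_eq_mul, mul_comm]
  · intro i hi i' hi' hii'
    rw [Function.onFun, Finset.disjoint_left]
    intro e he he'
    have h1 := coords_block t m hkn (Finset.mem_range.mp hi) he
      (e := e) (p := e.out.1) (Sym2.out_fst_mem e)
    have h2 := coords_block t m hkn (Finset.mem_range.mp hi') he'
      (e := e) (p := e.out.1) (Sym2.out_fst_mem e)
    omega

end UpperGraph

section UpperSat

variable (t : ℕ) (m : Fin t → ℕ)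

lemma block_pair_mem {n : ℕ} {hn0 : 0 < n} (hkn : 3 * (∑ r : Fin t, (m r - 1)) ≤ n)
    {i : ℕ} (hi : i < ∑ r : Fin t, (m r - 1)) {x y : Fin n} (hxy : x ≠ y)
    (hx1 : 3 * i ≤ (x : ℕ)) (hx2 : (x : ℕ) ≤ 3 * i + 2)
    (hy1 : 3 * i ≤ (y : ℕ)) (hy2 : (y : ℕ) ≤ 3 * i + 2) :
    s(x, y) ∈ triple n hn0 i := by
  have hxn : (x : ℕ) < n := x.2
  have hyn : (y : ℕ) < n := y.2
  have hxv : x = vtx n hn0 (x : ℕ) := Fin.ext (by rw [vtx_coe n hn0 hxn])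
  have hyv : y = vtx n hn0 (y : ℕ) := Fin.ext (by rw [vtx_coe n hn0 hyn])
  have hcne : (x : ℕ) ≠ (y : ℕ) := fun h => hxy (Fin.ext h)
  rw [triple, Finset.mem_insert, Finset.mem_insert, Finset.mem_singleton]
  have hcases : ((x:ℕ) = 3*i ∧ (y:ℕ) = 3*i+1) ∨ ((x:ℕ) = 3*i ∧ (y:ℕ) = 3*i+2) ∨
      ((x:ℕ) = 3*i+1 ∧ (y:ℕ) = 3*i+2) ∨ ((x:ℕ) = 3*i+1 ∧ (y:ℕ) = 3*i) ∨
      ((x:ℕ) = 3*i+2 ∧ (y:ℕ) = 3*i) ∨ ((x:ℕ) = 3*i+2 ∧ (y:ℕ) = 3*i+1) := by omega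
  rcases hcases with ⟨h1, h2⟩ | ⟨h1, h2⟩ | ⟨h1, h2⟩ | ⟨h1, h2⟩ | ⟨h1, h2⟩ | ⟨h1, h2⟩ <;>
    rw [hxv, hyv, h1, h2] <;>
    first
      | exact Or.inl rfl
      | exact Or.inr (Or.inl rfl)
      | exact Or.inr (Or.inr rfl)
      | exact Or.inl Sym2.eq_swap
      | exact Or.inr (Or.inl Sym2.eq_swap)
      | exact Or.inr (Or.inr Sym2.eq_swap)

lemma bad₀ {n : ℕ} {hn0 : 0 < n} (ht : 1 ≤ t) (hm : ∀ i, 1 ≤ m i)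
    (hkn : 3 * (∑ r : Fin t, (m r - 1)) ≤ n) :
    IsBadMatchingColoring t m (fromEdgeSet (↑(Eset t m n hn0) : Set (Sym2 (Fin n))))
      (fun e => gcol t m ht (blockOf e)) := by
  rintro j ⟨s, h1, h2, h3⟩
  have hmem : ∀ e ∈ s, ∃ i, i < ∑ r : Fin t, (m r - 1) ∧ e ∈ triple n hn0 i := by
    intro e he
    have := (h1 e he).1
    rw [SimpleGraph.edgeSet_fromEdgeSet] at this
    have heE : e ∈ Eset t m n hn0 := by exact_mod_cast this.1
    rw [Eset, Finset.mem_biUnion] at heE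
    obtain ⟨i, hi, hti⟩ := heE
    exact ⟨i, Finset.mem_range.mp hi, hti⟩
  have hcard : s.card ≤ ((Finset.range (∑ r : Fin t, (m r - 1))).filter
      (fun i => gcol t m ht i = j)).card := by
    apply Finset.card_le_card_of_injOn blockOf
    · intro e he
      obtain ⟨i, hi, hti⟩ := hmem e he
      rw [Finset.mem_coe, Finset.mem_filter, Finset.mem_range, blockOf_triple t m hkn hi hti]
      refine ⟨hi, ?_⟩
      have := (h1 e he).2
      rw [← blockOf_triple t m hkn hi hti]
      exact this
    · intro e he e' he' heq
      by_contra hne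
      obtain ⟨i, hi, hti⟩ := hmem e he
      obtain ⟨i', hi', hti'⟩ := hmem e' he'
      rw [blockOf_triple t m hkn hi hti, blockOf_triple t m hkn hi' hti'] at heq
      subst heq
      obtain ⟨a, b, j1, j2, j3, j4, j5, rfl⟩ := exists_coords t m hkn hi hti
      obtain ⟨a', b', l1, l2, l3, l4, l5, rfl⟩ := exists_coords t m hkn hi' hti'
      have d1 := h3 _ he _ he' hne (vtx n hn0 a) (Sym2.mem_mk_left _ _)
      have d2 := h3 _ he _ he' hne (vtx n hn0 b) (Sym2.mem_mk_right _ _)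
      rw [Sym2.mem_iff] at d1 d2
      push_neg at d1 d2
      have e1 : a ≠ a' := fun h => d1.1 (by rw [h])
      have e2 : a ≠ b' := fun h => d1.2 (by rw [h])
      have e3 : b ≠ a' := fun h => d2.1 (by rw [h])
      have e4 : b ≠ b' := fun h => d2.2 (by rw [h])
      omega
  rw [gcol_fiber_card t m ht j] at hcard
  have := hm j
  omega

/-- the triangle edge avoiding a vertex -/
def otherE (n : ℕ) (hn0 : 0 < n) (i : ℕ) (z : Fin n) : Sym2 (Fin n) :=
  if (z : ℕ) = 3 * i then s(vtx n hn0 (3 * i + 1), vtx n hn0 (3 * i + 2))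
  else if (z : ℕ) = 3 * i + 1 then s(vtx n hn0 (3 * i), vtx n hn0 (3 * i + 2))
  else s(vtx n hn0 (3 * i), vtx n hn0 (3 * i + 1))

lemma otherE_mem {n : ℕ} {hn0 : 0 < n} (i : ℕ) (z : Fin n) :
    otherE n hn0 i z ∈ triple n hn0 i := by
  rw [otherE, triple]
  split_ifs <;> simp

lemma otherE_avoid {n : ℕ} {hn0 : 0 < n} (hkn : 3 * (∑ r : Fin t, (m r - 1)) ≤ n)
    {i : ℕ} (hi : i < ∑ r : Fin t, (m r - 1)) (z : Fin n) :
    ∀ p ∈ otherE n hn0 i z, p ≠ z := by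
  intro p hp heq
  subst heq
  rw [otherE] at hp
  have hb0 : 3 * i < n := by omega
  have hb1 : 3 * i + 1 < n := by omega
  have hb2 : 3 * i + 2 < n := by omega
  split_ifs at hp with h1 h2
  · rw [Sym2.mem_iff] at hp
    rcases hp with rfl | rfl
    · rw [vtx_coe n hn0 hb1] at h1; omega
    · rw [vtx_coe n hn0 hb2] at h1; omega
  · rw [Sym2.mem_iff] at hp
    rcases hp with rfl | rfl
    · rw [vtx_coe n hn0 hb0] at h2; omega
    · rw [vtx_coe n hn0 hb2] at h2; omega
  · rw [Sym2.mem_iff] at hp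
    rcases hp with rfl | rfl
    · rw [vtx_coe n hn0 hb0] at h1; exact h1 rfl
    · rw [vtx_coe n hn0 hb1] at h2; exact h2 rfl

/-- matching edge choice in block `i`, avoiding `u` and `v` -/
def pick (n : ℕ) (hn0 : 0 < n) (u v : Fin n) (i : ℕ) : Sym2 (Fin n) :=
  if 3 * i ≤ (u : ℕ) ∧ (u : ℕ) ≤ 3 * i + 2 then otherE n hn0 i u
  else if 3 * i ≤ (v : ℕ) ∧ (v : ℕ) ≤ 3 * i + 2 then otherE n hn0 i v
  else s(vtx n hn0 (3 * i), vtx n hn0 (3 * i + 1))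

lemma pick_mem {n : ℕ} {hn0 : 0 < n} (u v : Fin n) (i : ℕ) :
    pick n hn0 u v i ∈ triple n hn0 i := by
  rw [pick]
  split_ifs
  · exact otherE_mem i u
  · exact otherE_mem i v
  · rw [triple]; simp

lemma pick_avoid {n : ℕ} {hn0 : 0 < n} (hkn : 3 * (∑ r : Fin t, (m r - 1)) ≤ n)
    {i : ℕ} (hi : i < ∑ r : Fin t, (m r - 1)) {u v : Fin n} (huv : u ≠ v)
    (hnadj : s(u, v) ∉ Eset t m n hn0) :
    ∀ p ∈ pick n hn0 u v i, p ≠ u ∧ p ≠ v := by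
  intro p hp
  have hblock := coords_block t m hkn hi (pick_mem u v i) hp
  rw [pick] at hp
  split_ifs at hp with h1 h2
  · -- u is in block i ; v cannot also be in block i
    have hvout : ¬(3 * i ≤ (v : ℕ) ∧ (v : ℕ) ≤ 3 * i + 2) := by
      intro h2
      apply hnadj
      rw [Eset, Finset.mem_biUnion]
      exact ⟨i, Finset.mem_range.mpr hi,
        block_pair_mem t m hkn hi huv h1.1 h1.2 h2.1 h2.2⟩
    refine ⟨otherE_avoid t m hkn hi u p hp, fun heq => ?_⟩
    subst heq
    exact hvout hblock
  · refine ⟨fun heq => ?_, otherE_avoid t m hkn hi v p hp⟩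
    subst heq
    exact h1 hblock
  · constructor
    · intro heq; subst heq; exact h1 hblock
    · intro heq; subst heq; exact h2 hblock

end UpperSat

section UpperMain

variable (t : ℕ) (m : Fin t → ℕ)

lemma sat₀ {n : ℕ} {hn0 : 0 < n} (hm : ∀ i, 1 ≤ m i)
    (hkn : 3 * (∑ r : Fin t, (m r - 1)) ≤ n) :
    ∀ u v : Fin n, u ≠ v → ¬(fromEdgeSet (↑(Eset t m n hn0) : Set (Sym2 (Fin n)))).Adj u v →
      ∀ c : Sym2 (Fin n) → Fin t,
        ¬IsBadMatchingColoring t m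
          ((fromEdgeSet (↑(Eset t m n hn0) : Set (Sym2 (Fin n)))) ⊔ fromEdgeSet {s(u, v)}) c := by
  intro u v hne hnadj c hbad
  have hsuvE : s(u, v) ∉ Eset t m n hn0 := by
    intro h
    exact hnadj (by rw [SimpleGraph.fromEdgeSet_adj]; exact ⟨by exact_mod_cast h, hne⟩)
  set k' := ∑ r : Fin t, (m r - 1) with hk'
  set W : Finset (Sym2 (Fin n)) :=
    insert s(u, v) ((Finset.range k').image (pick n hn0 u v)) with hW
  have hinj : Set.InjOn (pick n hn0 u v) (Finset.range k') := by
    intro i hi i' hi' heq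
    have b1 := blockOf_triple t m (hn0 := hn0) hkn (Finset.mem_range.mp hi) (pick_mem u v i)
    have b2 := blockOf_triple t m (hn0 := hn0) hkn (Finset.mem_range.mp hi') (pick_mem u v i')
    rw [← b1, ← b2, heq]
  have hsuvW : s(u, v) ∉ (Finset.range k').image (pick n hn0 u v) := by
    rw [Finset.mem_image]
    rintro ⟨i, hi, heq⟩
    exact (pick_avoid t m hkn (Finset.mem_range.mp hi) hne hsuvE u
      (heq ▸ Sym2.mem_mk_left u v)).1 rfl
  have hWcard : W.card = k' + 1 := by
    rw [hW, Finset.card_insert_of_notMem hsuvW, Finset.card_image_of_injOn hinj,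
      Finset.card_range]
  have hWedge : ∀ e ∈ W,
      e ∈ ((fromEdgeSet (↑(Eset t m n hn0) : Set (Sym2 (Fin n)))) ⊔
        fromEdgeSet {s(u, v)}).edgeSet := by
    intro e he
    rw [SimpleGraph.edgeSet_sup]
    rw [hW, Finset.mem_insert] at he
    rcases he with rfl | he
    · right
      rw [SimpleGraph.edgeSet_fromEdgeSet]
      refine ⟨Set.mem_singleton_iff.mpr rfl, ?_⟩
      rw [Sym2.mem_diagSet, Sym2.mk_isDiag_iff]
      exact hne
    · left
      rw [Finset.mem_image] at he
      obtain ⟨i, hi, rfl⟩ := he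
      rw [SimpleGraph.edgeSet_fromEdgeSet]
      have hmem : pick n hn0 u v i ∈ Eset t m n hn0 := by
        rw [Eset, Finset.mem_biUnion]
        exact ⟨i, hi, pick_mem u v i⟩
      exact ⟨by exact_mod_cast hmem, Eset_nondiag t m hkn hmem⟩
  have hWdisj : ∀ e ∈ W, ∀ f ∈ W, e ≠ f → ∀ p : Fin n, p ∈ e → p ∉ f := by
    intro e he f hf hef p hpe hpf
    rw [hW, Finset.mem_insert] at he hf
    rcases he with rfl | he <;> rcases hf with rfl | hf
    · exact hef rfl
    · rw [Finset.mem_image] at hf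
      obtain ⟨i, hi, rfl⟩ := hf
      have hav := pick_avoid t m hkn (Finset.mem_range.mp hi) hne hsuvE p hpf
      rw [Sym2.mem_iff] at hpe
      rcases hpe with rfl | rfl
      · exact hav.1 rfl
      · exact hav.2 rfl
    · rw [Finset.mem_image] at he
      obtain ⟨i, hi, rfl⟩ := he
      have hav := pick_avoid t m hkn (Finset.mem_range.mp hi) hne hsuvE p hpe
      rw [Sym2.mem_iff] at hpf
      rcases hpf with rfl | rfl
      · exact hav.1 rfl
      · exact hav.2 rfl
    · rw [Finset.mem_image] at he hf
      obtain ⟨i, hi, rfl⟩ := he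
      obtain ⟨i', hi', rfl⟩ := hf
      have hii' : i ≠ i' := fun h => hef (by rw [h])
      have c1 := coords_block t m hkn (Finset.mem_range.mp hi) (pick_mem u v i) hpe
      have c2 := coords_block t m hkn (Finset.mem_range.mp hi') (pick_mem u v i') hpf
      omega
  have hsum : W.card = ∑ j : Fin t, (W.filter (fun e => c e = j)).card :=
    Finset.card_eq_sum_card_fiberwise (fun e _ => Finset.mem_univ (c e))
  have hexj : ∃ j, m j ≤ (W.filter (fun e => c e = j)).card := by
    by_contra hall
    push_neg at hall
    have hle : ∑ j : Fin t, (W.filter (fun e => c e = j)).card ≤ ∑ j : Fin t, (m j - 1) := by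
      refine Finset.sum_le_sum (fun j _ => ?_)
      have h1 := hall j
      have h2 := hm j
      omega
    rw [← hsum, hWcard] at hle
    omega
  obtain ⟨j, hj⟩ := hexj
  obtain ⟨sub, hsub, hsubcard⟩ := Finset.exists_subset_card_eq hj
  refine hbad j ⟨sub, ?_, hsubcard, ?_⟩
  · intro e he
    have heW : e ∈ W := Finset.filter_subset _ _ (hsub he)
    exact ⟨hWedge e heW, (Finset.mem_filter.mp (hsub he)).2⟩
  · intro e he f hf hef
    exact hWdisj e (Finset.filter_subset _ _ (hsub he)) f
      (Finset.filter_subset _ _ (hsub hf)) hef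

theorem upperTheorem (ht : 1 ≤ t) (hm : ∀ i, 1 ≤ m i) (n : ℕ)
    (hn : 3 * ((∑ i, m i) - t) < n) :
    ∃ G : SimpleGraph (Fin n), IsRminMatchingSat t m G ∧
      G.edgeSet.ncard = 3 * ((∑ i, m i) - t) := by
  have hksum : ∑ j : Fin t, (m j - 1) = (∑ i, m i) - t := by
    have h1 : ∑ j : Fin t, m j = ∑ j : Fin t, ((m j - 1) + 1) := by
      refine Finset.sum_congr rfl (fun j _ => ?_)
      have := hm j
      omega
    rw [Finset.sum_add_distrib, Finset.sum_const, Finset.card_univ, Fintype.card_fin,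
      smul_eq_mul, mul_one] at h1
    omega
  have hn0 : 0 < n := by omega
  have hkn : 3 * (∑ r : Fin t, (m r - 1)) ≤ n := by rw [hksum]; omega
  refine ⟨fromEdgeSet (↑(Eset t m n hn0) : Set (Sym2 (Fin n))),
    ⟨⟨fun e => gcol t m ht (blockOf e), bad₀ t m ht hm hkn⟩, sat₀ t m hm hkn⟩, ?_⟩
  have hes : (fromEdgeSet (↑(Eset t m n hn0) : Set (Sym2 (Fin n)))).edgeSet
      = (↑(Eset t m n hn0) : Set (Sym2 (Fin n))) := by
    rw [SimpleGraph.edgeSet_fromEdgeSet]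
    ext e
    simp only [Set.mem_diff, Set.mem_setOf_eq, Finset.mem_coe]
    exact ⟨fun h => h.1, fun h => ⟨h, Eset_nondiag t m hkn h⟩⟩
  rw [hes, Set.ncard_coe_finset, Eset_card t m hkn, hksum]

end UpperMain



end SatProof

/-- For `m_1, …, m_t ≥ 1` and `n > 3(m_1 + ⋯ + m_t - t)`,
`sat(n, R_min(m_1·K_2, …, m_t·K_2)) = 3(m_1 + ⋯ + m_t - t)`. -/
theorem sat_Rmin_matchings (t : ℕ) (ht : 1 ≤ t) (m : Fin t → ℕ) (hm : ∀ i, 1 ≤ m i)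
    (n : ℕ) (hn : 3 * ((∑ i, m i) - t) < n) :
    (∀ G : SimpleGraph (Fin n), IsRminMatchingSat t m G →
      3 * ((∑ i, m i) - t) ≤ G.edgeSet.ncard) ∧
    (∃ G : SimpleGraph (Fin n), IsRminMatchingSat t m G ∧
      G.edgeSet.ncard = 3 * ((∑ i, m i) - t)) := by
  constructor
  · intro G hG
    haveI : Nonempty (Fin n) := ⟨⟨0, by omega⟩⟩
    haveI : DecidableRel G.Adj := Classical.decRel _
    have hlow := SatProof.lowerBound ht hm G hG (by rw [Fintype.card_fin]; exact hn)
    have hconv := Set.ncard_coe_finset G.edgeFinset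
    rw [SimpleGraph.coe_edgeFinset] at hconv
    rw [hconv]
    exact hlow
  · exact SatProof.upperTheorem t m ht hm n hn
end

section
/- Let k ≥ 3 be an integer, let G be an R_min(K_3, T_k)-saturated graph, and let c be a bad 2-coloring of G (with respect to k). Then for every connected component D of G_b, any two distinct vertices of D are adjacent in G; that is, the vertex set of D induces a complete subgraph of G. -/
open SimpleGraph

/-- In any bad 2-coloring of an `R_min(K_3, T_k)`-saturated graph, the vertex set of each
connected component of the blue graph induces a complete subgraph of `G`. -/
theorem blue_components_induce_cliques {V : Type} [Fintype V] (k : ℕ) (hk : 3 ≤ k)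
    (G R : SimpleGraph V) (hsat : IsRminSat k G) (hbad : IsBadColoring k G R) :
    ∀ u v : V, (G \ R).Reachable u v → u ≠ v → G.Adj u v := by
  intro u v hreach hne
  by_contra hadj
  obtain ⟨hRG, hfree, hcomp⟩ := hbad
  apply hsat.2 u v hne hadj R
  refine ⟨hRG.trans le_sup_left, hfree, ?_⟩
  have key : ∀ x w : V, ((G ⊔ fromEdgeSet {s(u, v)}) \ R).Reachable x w ↔
      (G \ R).Reachable x w := by
    intro x w
    constructor
    · intro h
      rw [SimpleGraph.reachable_iff_reflTransGen] at h
      induction h with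
      | refl => exact Reachable.refl x
      | tail _ hadj' ih =>
          refine ih.trans ?_
          obtain ⟨hsup, hnR⟩ := hadj'
          rcases hsup with hG | he
          · exact SimpleGraph.Adj.reachable ⟨hG, hnR⟩
          · rw [SimpleGraph.fromEdgeSet_adj, Set.mem_singleton_iff, Sym2.eq_iff] at he
            rcases he.1 with ⟨rfl, rfl⟩ | ⟨rfl, rfl⟩
            · exact hreach
            · exact hreach.symm
    · intro h
      exact h.mono (sdiff_le_sdiff le_sup_left le_rfl)
  intro x
  have hset : {w : V | ((G ⊔ fromEdgeSet {s(u, v)}) \ R).Reachable x w} =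
      {w : V | (G \ R).Reachable x w} := Set.ext fun w => key x w
  rw [hset]
  exact hcomp x
end

section
/- Let k ≥ 5 be an integer, let G be an R_min(K_3, T_k)-saturated graph on n ≥ 2k + (⌈k/2⌉ + 1)⌈k/2⌉ − 2 vertices, let c be a bad 2-coloring of G (with respect to k), and let D_1, …, D_p be the connected components of G_b. Then 2·Σ_{i=1}^{p} e(G[V(D_i)]) ≥ (⌈k/2⌉ − 1)·(n − k), where G[V(D_i)] denotes the subgraph of G induced by the vertex set of D_i. -/
open SimpleGraph

lemma reach_aux {V : Type} {H : SimpleGraph V} {u v : V} {x w : V}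
    (h : (H ⊔ fromEdgeSet {s(u,v)}).Reachable x w) :
    H.Reachable x w ∨ (H.Reachable x u ∧ H.Reachable v w) ∨
      (H.Reachable x v ∧ H.Reachable u w) := by
  obtain ⟨p⟩ := h
  induction p with
  | nil => exact Or.inl (Reachable.refl _)
  | @cons a b c hab p ih =>
    rcases hab with hab | hab
    · rcases ih with h1 | ⟨h1, h2⟩ | ⟨h1, h2⟩
      · exact Or.inl ((Adj.reachable hab).trans h1)
      · exact Or.inr (Or.inl ⟨(Adj.reachable hab).trans h1, h2⟩)
      · exact Or.inr (Or.inr ⟨(Adj.reachable hab).trans h1, h2⟩)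
    · rw [fromEdgeSet_adj, Set.mem_singleton_iff, Sym2.eq_iff] at hab
      rcases hab.1 with ⟨rfl, rfl⟩ | ⟨rfl, rfl⟩
      · rcases ih with h1 | ⟨h1, h2⟩ | ⟨h1, h2⟩
        · exact Or.inr (Or.inl ⟨Reachable.refl _, h1⟩)
        · exact Or.inl (h1.symm.trans h2)
        · exact Or.inl h2
      · rcases ih with h1 | ⟨h1, h2⟩ | ⟨h1, h2⟩
        · exact Or.inr (Or.inr ⟨Reachable.refl _, h1⟩)
        · exact Or.inl h2
        · exact Or.inl (h1.symm.trans h2)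

lemma adj_of_small {V : Type} [Fintype V] {k : ℕ} {G R : SimpleGraph V}
    (hsat : ∀ u v : V, u ≠ v → ¬ G.Adj u v →
      ¬ IsBadColoring k (G ⊔ fromEdgeSet {s(u, v)}) R)
    (hbad : IsBadColoring k G R) {u v : V} (huv : u ≠ v)
    (hsum : (G \ R).Reachable u v ∨
      {w | (G \ R).Reachable u w}.ncard + {w | (G \ R).Reachable v w}.ncard < k) :
    G.Adj u v := by
  by_contra hadj
  apply hsat u v huv hadj
  have hRuv : ¬ R.Adj u v := fun h => hadj (hbad.1 h)
  have hRvu : ¬ R.Adj v u := fun h => hadj ((hbad.1 h).symm)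
  have hdiff : (G ⊔ fromEdgeSet {s(u, v)}) \ R = (G \ R) ⊔ fromEdgeSet {s(u, v)} := by
    ext a b
    simp only [sdiff_adj, sup_adj, fromEdgeSet_adj, Set.mem_singleton_iff, Sym2.eq_iff]
    constructor
    · rintro ⟨hG | ⟨h1, h2⟩, hR⟩
      · exact Or.inl ⟨hG, hR⟩
      · exact Or.inr ⟨h1, h2⟩
    · rintro (⟨hG, hR⟩ | ⟨h1, h2⟩)
      · exact ⟨Or.inl hG, hR⟩
      · refine ⟨Or.inr ⟨h1, h2⟩, ?_⟩
        rcases h1 with ⟨rfl, rfl⟩ | ⟨rfl, rfl⟩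
        · exact hRuv
        · exact hRvu
  refine ⟨le_trans hbad.1 le_sup_left, hbad.2.1, ?_⟩
  intro x
  rw [hdiff]
  by_cases hx : (G \ R).Reachable x u ∨ (G \ R).Reachable x v
  · have hsub : {w | ((G \ R) ⊔ fromEdgeSet {s(u, v)}).Reachable x w} ⊆
        {w | (G \ R).Reachable u w} ∪ {w | (G \ R).Reachable v w} := by
      intro w hw
      rcases reach_aux hw with h1 | ⟨h1, h2⟩ | ⟨h1, h2⟩
      · rcases hx with hx | hx
        · exact Or.inl (hx.symm.trans h1)
        · exact Or.inr (hx.symm.trans h1)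
      · exact Or.inr h2
      · exact Or.inl h2
    rcases hsum with hr | hlt
    · have heq : {w | (G \ R).Reachable u w} ∪ {w | (G \ R).Reachable v w} =
          {w | (G \ R).Reachable u w} := by
        apply Set.union_eq_self_of_subset_right
        intro w hw
        exact hr.trans hw
      calc {w | ((G \ R) ⊔ fromEdgeSet {s(u, v)}).Reachable x w}.ncard
          ≤ ({w | (G \ R).Reachable u w} ∪ {w | (G \ R).Reachable v w}).ncard :=
            Set.ncard_le_ncard hsub (Set.toFinite _)
        _ = _ := by rw [heq]
        _ < k := hbad.2.2 u
    · calc {w | ((G \ R) ⊔ fromEdgeSet {s(u, v)}).Reachable x w}.ncard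
          ≤ ({w | (G \ R).Reachable u w} ∪ {w | (G \ R).Reachable v w}).ncard :=
            Set.ncard_le_ncard hsub (Set.toFinite _)
        _ ≤ {w | (G \ R).Reachable u w}.ncard + {w | (G \ R).Reachable v w}.ncard :=
            Set.ncard_union_le _ _
        _ < k := hlt
  · push_neg at hx
    have hsub : {w | ((G \ R) ⊔ fromEdgeSet {s(u, v)}).Reachable x w} ⊆
        {w | (G \ R).Reachable x w} := by
      intro w hw
      rcases reach_aux hw with h1 | ⟨h1, h2⟩ | ⟨h1, h2⟩
      · exact h1
      · exact absurd h1 hx.1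
      · exact absurd h1 hx.2
    exact lt_of_le_of_lt (Set.ncard_le_ncard hsub (Set.toFinite _)) (hbad.2.2 x)

lemma supp_eq_reach {V : Type} (H : SimpleGraph V) (v : V) :
    (H.connectedComponentMk v).supp = {w | H.Reachable v w} := by
  ext w
  simp only [ConnectedComponent.mem_supp_iff, ConnectedComponent.eq, Set.mem_setOf_eq]
  exact reachable_comm

lemma ncard_eq_card {V : Type} [Fintype V] (s : Set V) [Fintype s] :
    s.ncard = Fintype.card s := by
  rw [← Nat.card_coe_set_eq, Nat.card_eq_fintype_card]

lemma main_count {V : Type} [Fintype V] {k n : ℕ} (hk : 5 ≤ k)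
    (hn : Fintype.card V = n) (G R : SimpleGraph V)
    [inst : Fintype (G \ R).ConnectedComponent]
    (hsat : ∀ u v : V, u ≠ v → ¬ G.Adj u v →
      ¬ IsBadColoring k (G ⊔ fromEdgeSet {s(u, v)}) R)
    (hbad : IsBadColoring k G R) :
    ((k + 1) / 2 - 1) * (n - k) ≤
      2 * ∑ C : (G \ R).ConnectedComponent, (G.induce C.supp).edgeSet.ncard := by
  classical
  set q := (k + 1) / 2 with hq
  -- every blue component is a clique in G
  have hclique : ∀ (C : (G \ R).ConnectedComponent) (a b : V),
      a ∈ C.supp → b ∈ C.supp → a ≠ b → G.Adj a b := by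
    intro C a b ha hb hab
    apply adj_of_small hsat hbad hab
    rw [ConnectedComponent.mem_supp_iff] at ha hb
    exact Or.inl (ConnectedComponent.eq.mp (ha.trans hb.symm))
  -- per-component edge count
  have hedge : ∀ C : (G \ R).ConnectedComponent,
      C.supp.ncard * (C.supp.ncard - 1) ≤ 2 * (G.induce C.supp).edgeSet.ncard := by
    intro C
    have htop : G.induce C.supp = (⊤ : SimpleGraph C.supp) := by
      ext a b
      simp only [comap_adj, top_adj]
      constructor
      · intro h
        exact fun he => h.ne (congrArg Subtype.val he)
      · intro hne
        exact hclique C a b a.2 b.2 (fun h => hne (Subtype.ext h))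
    rw [htop]
    have h1 : (⊤ : SimpleGraph C.supp).edgeSet.ncard =
        (Fintype.card C.supp).choose 2 := by
      rw [ncard_eq_card, ← edgeFinset_card, card_edgeFinset_top_eq_card_choose_two]
    rw [h1, ← ncard_eq_card, Nat.choose_two_right]
    obtain ⟨c, hc⟩ := Nat.even_mul_pred_self C.supp.ncard
    omega
  -- sum of component sizes is n
  have hpart : ∑ C : (G \ R).ConnectedComponent, C.supp.ncard = n := by
    rw [← hn, ← Finset.card_univ,
      Finset.card_eq_sum_card_fiberwise
        (f := (G \ R).connectedComponentMk) (t := Finset.univ) (fun x _ => Finset.mem_univ _)]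
    apply Finset.sum_congr rfl
    intro C _
    rw [ncard_eq_card, Fintype.card_subtype]
    apply Finset.card_bij (fun v _ => v) <;> simp [ConnectedComponent.mem_supp_iff]
  -- at most two small components
  have hsmall_card : (Finset.univ.filter
      (fun C : (G \ R).ConnectedComponent => C.supp.ncard < q)).card ≤ 2 := by
    by_contra hcon
    push_neg at hcon
    obtain ⟨t, hts, ht3⟩ := Finset.exists_subset_card_eq hcon
    obtain ⟨C1, C2, C3, h12, h13, h23, rfl⟩ := Finset.card_eq_three.mp ht3
    have hm : ∀ C ∈ ({C1, C2, C3} : Finset _), C.supp.ncard < q := by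
      intro C hC
      exact (Finset.mem_filter.mp (hts hC)).2
    obtain ⟨v1, hv1⟩ := C1.exists_rep
    obtain ⟨v2, hv2⟩ := C2.exists_rep
    obtain ⟨v3, hv3⟩ := C3.exists_rep
    have hsz : ∀ (v : V) (C : (G \ R).ConnectedComponent),
        (G \ R).connectedComponentMk v = C → C ∈ ({C1, C2, C3} : Finset _) →
        {w | (G \ R).Reachable v w}.ncard < q := by
      intro v C hv hC
      rw [← supp_eq_reach, hv]
      exact hm C hC
    have key : ∀ (a b : V) (Ca Cb : (G \ R).ConnectedComponent),
        (G \ R).connectedComponentMk a = Ca → (G \ R).connectedComponentMk b = Cb →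
        Ca ≠ Cb → Ca ∈ ({C1, C2, C3} : Finset _) → Cb ∈ ({C1, C2, C3} : Finset _) →
        R.Adj a b := by
      intro a b Ca Cb ha hb hne hCa hCb
      have hne' : a ≠ b := by
        rintro rfl
        exact hne (ha.symm.trans hb)
      have hnr : ¬ (G \ R).Reachable a b := by
        intro h
        exact hne (by rw [← ha, ← hb]; exact ConnectedComponent.sound h)
      have hGa : G.Adj a b := by
        apply adj_of_small hsat hbad hne'
        right
        have h1 := hsz a Ca ha hCa
        have h2 := hsz b Cb hb hCb
        omega
      by_contra hR
      exact hnr (Adj.reachable ((sdiff_adj G R a b).mpr ⟨hGa, hR⟩))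
    have m1 : C1 ∈ ({C1, C2, C3} : Finset _) := by simp
    have m2 : C2 ∈ ({C1, C2, C3} : Finset _) := by simp
    have m3 : C3 ∈ ({C1, C2, C3} : Finset _) := by simp
    exact hbad.2.1 {v1, v2, v3} (is3Clique_triple_iff.mpr
      ⟨key v1 v2 C1 C2 hv1 hv2 h12 m1 m2,
       key v1 v3 C1 C3 hv1 hv3 h13 m1 m3,
       key v2 v3 C2 C3 hv2 hv3 h23 m2 m3⟩)
  -- sum over small components is at most k
  set small := Finset.univ.filter
      (fun C : (G \ R).ConnectedComponent => C.supp.ncard < q) with hsmalldef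
  have hsmall_sum : ∑ C ∈ small, C.supp.ncard ≤ 2 * (q - 1) := by
    calc ∑ C ∈ small, C.supp.ncard ≤ small.card • (q - 1) := by
          apply Finset.sum_le_card_nsmul
          intro C hC
          have := (Finset.mem_filter.mp hC).2
          omega
      _ = small.card * (q - 1) := by rw [smul_eq_mul]
      _ ≤ 2 * (q - 1) := Nat.mul_le_mul_right _ hsmall_card
  set big := Finset.univ.filter
      (fun C : (G \ R).ConnectedComponent => ¬ C.supp.ncard < q) with hbigdef
  have hsplit : ∑ C ∈ small, C.supp.ncard + ∑ C ∈ big, C.supp.ncard = n := by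
    rw [← hpart]
    exact Finset.sum_filter_add_sum_filter_not _ _ _
  have hnk : n - k ≤ ∑ C ∈ big, C.supp.ncard := by omega
  calc (q - 1) * (n - k) ≤ (q - 1) * ∑ C ∈ big, C.supp.ncard :=
        Nat.mul_le_mul_left _ hnk
    _ = ∑ C ∈ big, (q - 1) * C.supp.ncard := Finset.mul_sum _ _ _
    _ ≤ ∑ C ∈ big, C.supp.ncard * (C.supp.ncard - 1) := by
        apply Finset.sum_le_sum
        intro C hC
        have := (Finset.mem_filter.mp hC).2
        rw [mul_comm]
        exact Nat.mul_le_mul_left _ (by omega)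
    _ ≤ ∑ C : (G \ R).ConnectedComponent, C.supp.ncard * (C.supp.ncard - 1) :=
        Finset.sum_le_sum_of_subset (Finset.filter_subset _ _)
    _ ≤ ∑ C : (G \ R).ConnectedComponent, 2 * (G.induce C.supp).edgeSet.ncard :=
        Finset.sum_le_sum (fun C _ => hedge C)
    _ = 2 * ∑ C : (G \ R).ConnectedComponent, (G.induce C.supp).edgeSet.ncard :=
        (Finset.mul_sum _ _ _).symm


/-- Lower bound for twice the total number of edges of the subgraphs of `G` induced by the
connected components of the blue graph of a bad 2-coloring of an `R_min(K_3, T_k)`-saturated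
graph. -/
theorem blue_components_edge_sum_lower {V : Type} [Fintype V] (k n : ℕ) (hk : 5 ≤ k)
    (hn : Fintype.card V = n)
    (hcard : 2 * k + ((k + 1) / 2 + 1) * ((k + 1) / 2) - 2 ≤ n)
    (G R : SimpleGraph V) (hsat : IsRminSat k G) (hbad : IsBadColoring k G R) :
    letI : Fintype (G \ R).ConnectedComponent := Fintype.ofFinite _
    ((k + 1) / 2 - 1) * (n - k) ≤
      2 * ∑ C : (G \ R).ConnectedComponent, (G.induce C.supp).edgeSet.ncard :=
  main_count (inst := Fintype.ofFinite _) hk hn G R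
    (fun u v h1 h2 => hsat.2 u v h1 h2 R) hbad
end
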